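/- arXiv:0908.0968 — 7 statements merged into one kernel-verified Lean document; each statement's English description precedes it below -/
import Mathlib

section
/- Let E be a finite set with |E| ≤ n² for a positive integer n, and let P be a function from nonnegative weight functions w : E → ℝ≥0 to ℝ≥0 such that for every w, every e ∈ E, and every r ≥ 0, one has P(w) ≤ P(w′) ≤ P(w) + r, where w′ agrees with w except that w′(e) = w(e) + r. Let ε > 0, x > 0, and let t be a real with 0 ≤ t ≤ ε·x / (n²(1+ε)). Define w′ from w by setting w′(e) = 0 whenever w(e) < t and w′(e) = w(e) otherwise. If P(w) ≥ x, then P(w)/(1+ε) < P(w′) ≤ P(w). -/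
/-!
Raising the entries of the shrunk weight function back to those of `w` one at a time
shows, by the two-sided single-element hypothesis, that `P` drops under shrinking by at most
the total weight removed. Each removed weight is below `t`, so that total is less than
`|E| t ≤ n² t ≤ ε x / (1 + ε) ≤ ε P(w) / (1 + ε)`, which is exactly the slack between
`P w` and `P w / (1 + ε)`.
-/

open NNReal Finset

def IncrementBounded {E : Type*} [DecidableEq E] (P : (E → ℝ≥0) → ℝ≥0) : Prop :=
  ∀ (w : E → ℝ≥0) (e : E) (r : ℝ≥0),
    P w ≤ P (Function.update w e (w e + r)) ∧ P (Function.update w e (w e + r)) ≤ P w + r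

namespace IncrementBounded

variable {E : Type*} [DecidableEq E] {P : (E → ℝ≥0) → ℝ≥0}

theorem le_and_piecewise_le (hP : IncrementBounded P) (v u : E → ℝ≥0) (s : Finset E) :
    P v ≤ P (s.piecewise (v + u) v) ∧ P (s.piecewise (v + u) v) ≤ P v + ∑ e ∈ s, u e := by
  induction s using Finset.induction_on with
  | empty => simp
  | insert a s ha ih =>
    have hstep : (insert a s).piecewise (v + u) v =
        Function.update (s.piecewise (v + u) v) a (s.piecewise (v + u) v a + u a) := by
      rw [Finset.piecewise_insert, Finset.piecewise_eq_of_notMem _ _ _ ha, Pi.add_apply]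
    obtain ⟨hmono, hlip⟩ := hP (s.piecewise (v + u) v) a (u a)
    rw [hstep, Finset.sum_insert ha]
    refine ⟨ih.1.trans hmono, hlip.trans ?_⟩
    calc P (s.piecewise (v + u) v) + u a ≤ P v + ∑ e ∈ s, u e + u a := by gcongr; exact ih.2
      _ = P v + (u a + ∑ e ∈ s, u e) := by ring

theorem le_and_le_add_sum_tsub [Fintype E] (hP : IncrementBounded P) {v w : E → ℝ≥0}
    (hvw : v ≤ w) : P v ≤ P w ∧ P w ≤ P v + ∑ e, (w e - v e) := by
  have hw : univ.piecewise (v + (w - v)) v = w := by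
    rw [Finset.piecewise_univ, add_tsub_cancel_of_le hvw]
  simpa only [hw, Pi.sub_apply] using hP.le_and_piecewise_le v (w - v) univ

end IncrementBounded

section Shrink

variable {E : Type*}

/-- The weights of the shrunk graph `G_i` of the paper, with threshold `t = (1 + ε)^(i - κ)`. -/
noncomputable def shrink (t : ℝ≥0) (w : E → ℝ≥0) : E → ℝ≥0 :=
  fun e => if w e < t then 0 else w e

theorem shrink_le (t : ℝ≥0) (w : E → ℝ≥0) : shrink t w ≤ w := fun e => by
  unfold shrink; split_ifs <;> simp

theorem sum_tsub_shrink [Fintype E] (t : ℝ≥0) (w : E → ℝ≥0) :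
    ∑ e, (w e - shrink t w e) = ∑ e ∈ univ.filter (fun e => w e < t), w e := by
  rw [Finset.sum_filter]
  refine Finset.sum_congr rfl fun e _ => ?_
  unfold shrink; split_ifs <;> simp

theorem sum_tsub_shrink_lt [Fintype E] {t c : ℝ≥0} (w : E → ℝ≥0) (hc : 0 < c)
    (htc : Fintype.card E * t ≤ c) : ∑ e, (w e - shrink t w e) < c := by
  rw [sum_tsub_shrink]
  set S := univ.filter (fun e => w e < t)
  rcases S.eq_empty_or_nonempty with hS | hS
  · simpa [hS] using hc
  calc ∑ e ∈ S, w e < ∑ _e ∈ S, t :=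
        Finset.sum_lt_sum_of_nonempty hS fun e he => (mem_filter.1 he).2
    _ = #S * t := by rw [sum_const, nsmul_eq_mul]
    _ ≤ Fintype.card E * t := by gcongr; exact card_le_univ S
    _ ≤ c := htc

end Shrink

theorem shrinking_short_edges_general {E : Type*} [Fintype E] [DecidableEq E]
    (n : ℕ) (hcard : Fintype.card E ≤ n ^ 2)
    (P : (E → ℝ≥0) → ℝ≥0)
    (hP : ∀ (w : E → ℝ≥0) (e : E) (r : ℝ≥0),
      P w ≤ P (Function.update w e (w e + r)) ∧
      P (Function.update w e (w e + r)) ≤ P w + r)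
    (ε x t : ℝ≥0) (hε : 0 < ε) (hx : 0 < x)
    (ht : t ≤ ε * x / ((n : ℝ≥0) ^ 2 * (1 + ε)))
    (w : E → ℝ≥0) (hw : x ≤ P w) :
    P w / (1 + ε) < P (fun e => if w e < t then 0 else w e) ∧
    P (fun e => if w e < t then 0 else w e) ≤ P w := by
  change P w / (1 + ε) < P (shrink t w) ∧ P (shrink t w) ≤ P w
  obtain ⟨hmono, hlip⟩ := IncrementBounded.le_and_le_add_sum_tsub hP (shrink_le t w)
  refine ⟨?_, hmono⟩
  have hcardt : Fintype.card E * t ≤ ε * x / (1 + ε) :=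
    calc (Fintype.card E : ℝ≥0) * t
        ≤ (n : ℝ≥0) ^ 2 * (ε * x / ((n : ℝ≥0) ^ 2 * (1 + ε))) := by
          gcongr; exact_mod_cast hcard
      _ ≤ ε * x / (1 + ε) := by rw [mul_div_assoc']; exact mul_div_mul_left_le zero_le
  have hloss := sum_tsub_shrink_lt w (by positivity) hcardt
  have hsplit : P w = P w / (1 + ε) + ε * P w / (1 + ε) := by
    rw [← add_div, ← one_add_mul, mul_div_cancel_left₀ _ (by positivity)]
  refine lt_of_add_lt_add_right (a := ε * P w / (1 + ε)) ?_
  calc P w / (1 + ε) + ε * P w / (1 + ε) = P w := hsplit.symm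
    _ ≤ P (shrink t w) + ∑ e, (w e - shrink t w e) := hlip
    _ < P (shrink t w) + ε * x / (1 + ε) := by gcongr
    _ ≤ P (shrink t w) + ε * P w / (1 + ε) := by gcongr

/-- **Shrinking small weights.** Let `P` be a function on nonnegative weight functions on a
finite set `E` with `|E| ≤ n²` such that increasing the weight of a single element by `r`
does not decrease `P` and increases it by at most `r`. If `0 ≤ t ≤ ε·x/(n²(1+ε))` and `w'`
is obtained from `w` by zeroing out all weights below `t`, then `P w ≥ x` implies
`P w / (1+ε) < P w' ≤ P w`. -/
theorem shrinking_short_edges {E : Type*} [Fintype E] [DecidableEq E]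
    (n : ℕ) (hn : 0 < n) (hcard : Fintype.card E ≤ n ^ 2)
    (P : (E → ℝ≥0) → ℝ≥0)
    (hP : ∀ (w : E → ℝ≥0) (e : E) (r : ℝ≥0),
      P w ≤ P (Function.update w e (w e + r)) ∧
      P (Function.update w e (w e + r)) ≤ P w + r)
    (ε x t : ℝ≥0) (hε : 0 < ε) (hx : 0 < x)
    (ht : t ≤ ε * x / ((n : ℝ≥0) ^ 2 * (1 + ε)))
    (w : E → ℝ≥0) (hw : x ≤ P w) :
    P w / (1 + ε) < P (fun e => if w e < t then 0 else w e) ∧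
    P (fun e => if w e < t then 0 else w e) ≤ P w :=
  shrinking_short_edges_general n hcard P hP ε x t hε hx ht w hw
end

section
/- Let ε > 0 and let N be a positive integer. Let q₀, …, q_{N−1} and q′₀, …, q′_{N−1} be nonnegative reals satisfying q′₀ = q₀, q′_i ≤ q_i for all 0 ≤ i ≤ N−1, and q′_{i−1} ≥ q_i for all 1 ≤ i ≤ N−1. Define A = q₀ + ∑_{i=1}^{N−1} ε·(1+ε)^{i−1}·q_i and A′ = q′₀ + ∑_{i=1}^{N−1} ε·(1+ε)^{i−1}·q′_i. Then A/(1+ε) ≤ A′ ≤ A. -/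
open Finset

/-!
Write `B_M(q) = q 0 + ∑_{i=1}^{M} ε (1+ε)^(i-1) q i`. The weights are monotone in `q`, which gives
`A' ≤ A` from `q' ≤ q`. Multiplying by `1 + ε` shifts the weights by one bucket:
`(1+ε) B_M(q') = B_{M+1}(i ↦ q' (i-1))`, and dropping the last, nonnegative, term leaves
`B_M(i ↦ q' (i-1))`, which dominates `A = B_M(q)` termwise by `q i ≤ q' (i-1)`.
-/

def bucketSum (ε : ℝ) (M : ℕ) (q : ℕ → ℝ) : ℝ :=
  q 0 + ∑ i ∈ Icc 1 M, ε * (1 + ε) ^ (i - 1) * q i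

namespace bucketSum

variable {ε : ℝ} {M : ℕ} {p q : ℕ → ℝ}

theorem succ (ε : ℝ) (M : ℕ) (q : ℕ → ℝ) :
    bucketSum ε (M + 1) q = bucketSum ε M q + ε * (1 + ε) ^ M * q (M + 1) := by
  simp only [bucketSum, sum_Icc_succ_top (Nat.le_add_left 1 M), Nat.add_sub_cancel, add_assoc]

theorem mono (hε : 0 ≤ ε) (h : ∀ i ≤ M, q i ≤ p i) : bucketSum ε M q ≤ bucketSum ε M p := by
  refine add_le_add (h 0 M.zero_le) (sum_le_sum fun i hi => ?_)
  exact mul_le_mul_of_nonneg_left (h i (mem_Icc.mp hi).2) (by positivity)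

theorem le_succ (hε : 0 ≤ ε) (hq : 0 ≤ q (M + 1)) : bucketSum ε M q ≤ bucketSum ε (M + 1) q := by
  rw [succ]
  exact le_add_of_nonneg_right (by positivity)

/-- `i - 1` truncates at `0`, so the shifted sequence starts `q 0, q 0, q 1, …`. -/
theorem one_add_mul (ε : ℝ) (M : ℕ) (q : ℕ → ℝ) :
    (1 + ε) * bucketSum ε M q = bucketSum ε (M + 1) (fun i => q (i - 1)) := by
  induction M with
  | zero =>
    simp only [bucketSum, Icc_self, sum_singleton, Order.lt_one_iff, Icc_eq_empty_of_lt, sum_empty,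
      add_zero, zero_tsub, tsub_self, pow_zero, mul_one]
    ring
  | succ M ih =>
    rw [succ ε M, mul_add, ih, succ ε (M + 1), Nat.add_sub_cancel, pow_succ]
    ring

end bucketSum

theorem bucket_sum_comparison_general (ε : ℝ) (hε : 0 < ε) (N : ℕ)
    (q q' : ℕ → ℝ)
    (hq' : ∀ i ≤ N - 1, 0 ≤ q' i)
    (h0 : q' 0 = q 0)
    (hle : ∀ i ≤ N - 1, q' i ≤ q i)
    (hge : ∀ i, 1 ≤ i → i ≤ N - 1 → q i ≤ q' (i - 1)) :
    (q 0 + ∑ i ∈ Icc 1 (N - 1), ε * (1 + ε) ^ (i - 1) * q i) / (1 + ε)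
      ≤ q' 0 + ∑ i ∈ Icc 1 (N - 1), ε * (1 + ε) ^ (i - 1) * q' i ∧
    q' 0 + ∑ i ∈ Icc 1 (N - 1), ε * (1 + ε) ^ (i - 1) * q' i
      ≤ q 0 + ∑ i ∈ Icc 1 (N - 1), ε * (1 + ε) ^ (i - 1) * q i := by
  have hq_le_shift : ∀ i ≤ N - 1, q i ≤ q' (i - 1) := by
    intro i hi
    rcases Nat.eq_zero_or_pos i with rfl | hi0
    · exact h0.ge
    · exact hge i hi0 hi
  refine ⟨(div_le_iff₀' (by linarith)).mpr ?_, bucketSum.mono hε.le hle⟩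
  calc bucketSum ε (N - 1) q
      ≤ bucketSum ε (N - 1) (fun i => q' (i - 1)) := bucketSum.mono hε.le hq_le_shift
    _ ≤ bucketSum ε (N - 1 + 1) (fun i => q' (i - 1)) :=
        bucketSum.le_succ hε.le (hq' (N - 1) le_rfl)
    _ = (1 + ε) * bucketSum ε (N - 1) q' := (bucketSum.one_add_mul ε (N - 1) q').symm

/-- Comparison of the geometric-bucket sums built from the tail probabilities `q i` of the
original randomly weighted graph and the tail probabilities `q' i` of the shrunk graphs:
if `q'₀ = q₀`, `q' i ≤ q i` for all `0 ≤ i ≤ N-1` and `q' (i-1) ≥ q i` for all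
`1 ≤ i ≤ N-1`, then `A / (1+ε) ≤ A' ≤ A`. -/
theorem bucket_sum_comparison (ε : ℝ) (hε : 0 < ε) (N : ℕ) (hN : 0 < N)
    (q q' : ℕ → ℝ)
    (hq : ∀ i ≤ N - 1, 0 ≤ q i) (hq' : ∀ i ≤ N - 1, 0 ≤ q' i)
    (h0 : q' 0 = q 0)
    (hle : ∀ i ≤ N - 1, q' i ≤ q i)
    (hge : ∀ i, 1 ≤ i → i ≤ N - 1 → q i ≤ q' (i - 1)) :
    (q 0 + ∑ i ∈ Icc 1 (N - 1), ε * (1 + ε) ^ (i - 1) * q i) / (1 + ε)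
      ≤ q' 0 + ∑ i ∈ Icc 1 (N - 1), ε * (1 + ε) ^ (i - 1) * q' i ∧
    q' 0 + ∑ i ∈ Icc 1 (N - 1), ε * (1 + ε) ^ (i - 1) * q' i
      ≤ q 0 + ∑ i ∈ Icc 1 (N - 1), ε * (1 + ε) ^ (i - 1) * q i :=
  bucket_sum_comparison_general ε hε N q q' hq' h0 hle hge
end

section
/- Let G be a finite connected multigraph on n ≥ 2 vertices, let χ ≥ 1 be its minimum cut size, and suppose each edge of G independently becomes 'heavy' with probability p ∈ (0,1). Define η by p^χ = n^{−(2+η)} and assume η > 0. Then for every real α ≥ 1, the probability that there exists some compact cut C of G of size at least αχ such that every edge crossing C is heavy is at most 49·n^{−αη}. -/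
open MeasureTheory ProbabilityTheory Finset

/-- A multigraph on vertex type `V` with edge type `E` is given by a map
`ends : E → Sym2 V` assigning to each edge its unordered pair of endpoints.
`Crosses ends s e` says that the edge `e` crosses the cut (vertex partition)
described by the setoid `s`, i.e. its endpoints lie in different clusters. -/
def Crosses {V E : Type*} (ends : E → Sym2 V) (s : Setoid V) (e : E) : Prop :=
  ∃ u v : V, ends e = s(u, v) ∧ ¬ s u v

/-- The size of the cut `s`: the number of crossing edges. -/
noncomputable def cutSize {V E : Type*} (ends : E → Sym2 V) (s : Setoid V) : ℕ :=
  Nat.card {e : E // Crosses ends s e}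

/-- The vertex subset `S` is nonempty and connected in the multigraph `ends`,
using only edges with both endpoints in `S`. -/
def ConnectedOn {V E : Type*} (ends : E → Sym2 V) (S : Set V) : Prop :=
  S.Nonempty ∧ ∀ u ∈ S, ∀ v ∈ S,
    Relation.ReflTransGen (fun a b => a ∈ S ∧ b ∈ S ∧ ∃ e, ends e = s(a, b)) u v

/-- `s` is a cut: its partition of the vertex set has at least two clusters. -/
def IsCut {V : Type*} (s : Setoid V) : Prop :=
  ∃ u v : V, ¬ s u v

/-- `s` is a compact cut of the multigraph `ends`: it is a cut and every cluster
induces a connected subgraph. -/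
def IsCompactCut {V E : Type*} (ends : E → Sym2 V) (s : Setoid V) : Prop :=
  IsCut s ∧ ∀ v : V, ConnectedOn ends {u | s u v}

/-- The number of edges crossing the 2-way cut determined by the vertex subset `A`. -/
noncomputable def twoWaySize {V E : Type*} (ends : E → Sym2 V) (A : Set V) : ℕ :=
  Nat.card {e : E // ∃ u v : V, ends e = s(u, v) ∧ u ∈ A ∧ v ∉ A}


/-!
Karger's contraction argument, made deterministic. Contracting a uniformly random crossing edge
of a partition with `j` classes (it has at least `jχ/2` crossing edges, by minimality of `χ`)
destroys a fixed coarser cut of size `σ` with probability at most `2σ/(jχ)`. Hence for every `r`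
the weights `∏_{r<j≤n} (1 - 2σ/(jχ))₊` of all partitions sum to at most the number of partitions
of an `r`-set, which is at most `B(r) = ∑_{k≤r} k^r/k!`. A cut of size `σ ≥ αχ` has
`p^σ = n^(-2σ/χ) n^(-ησ/χ)`, and for `r = ⌈2σ/χ⌉` (capped at `n`) its weight is at least
`r! n^(-2σ/χ)`. The union bound over all partitions, compact or not, is therefore at most
`n^(-αη) ∑_r B(r)/r! ≤ e^e n^(-αη)`.
-/

open scoped Nat

namespace Karger

open scoped Classical

instance (W : Type*) [Finite W] : Finite (Setoid W) :=
  Finite.of_injective (fun s : Setoid W => s.r) fun s t h => by cases s; cases t; congr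

noncomputable instance (W : Type*) [Finite W] : Fintype (Setoid W) := Fintype.ofFinite _

noncomputable def bellBound (r : ℕ) : ℝ := ∑ k ∈ range (r + 1), (k : ℝ) ^ r / k !

/-- Labelling the classes of a partition with `k` classes by `Fin k` in each of the `k!`
possible ways gives distinct maps `W → Fin k`. -/
theorem card_setoid_card_quotient_eq_mul_factorial_le (W : Type*) [Finite W] (k : ℕ) :
    Nat.card {s : Setoid W // Nat.card (Quotient s) = k} * k ! ≤ k ^ Nat.card W := by
  let label (s : {s : Setoid W // Nat.card (Quotient s) = k}) : Quotient s.1 ≃ Fin k :=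
    Finite.equivFinOfCardEq s.2
  let f (x : {s : Setoid W // Nat.card (Quotient s) = k} × Equiv.Perm (Fin k)) (w : W) :
      Fin k := x.2 (label x.1 ⟦w⟧)
  have hker : ∀ x, Setoid.ker (f x) = x.1.1 := fun x => by
    ext u v
    simp [f, Setoid.ker_def, Quotient.eq]
  have hf : Function.Injective f := by
    rintro ⟨s, g⟩ ⟨s', g'⟩ h
    obtain rfl : s = s' := Subtype.ext (by simpa [hker] using congrArg Setoid.ker h)
    refine Prod.ext rfl (Equiv.ext fun i => ?_)
    obtain ⟨q, rfl⟩ := (label s).surjective i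
    induction q using Quotient.ind with | _ w => exact congrFun h w
  have := Nat.card_le_card_of_injective f hf
  rwa [Nat.card_prod, Nat.card_perm, Nat.card_fun, Nat.card_fin] at this

theorem card_setoid_le_bellBound (W : Type*) [Finite W] :
    (Nat.card (Setoid W) : ℝ) ≤ bellBound (Nat.card W) := by
  have hmaps : ∀ s ∈ (univ : Finset (Setoid W)), Nat.card (Quotient s) ∈ range (Nat.card W + 1) :=
    fun s _ => mem_range_succ_iff.2 (Nat.card_le_card_of_surjective _ Quotient.mk_surjective)
  rw [Nat.card_eq_fintype_card, ← card_univ, card_eq_sum_card_fiberwise hmaps, bellBound]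
  push_cast
  refine sum_le_sum fun k _ => (le_div_iff₀ (by positivity)).2 ?_
  rw [← Fintype.card_subtype, ← Nat.card_eq_fintype_card]
  exact_mod_cast card_setoid_card_quotient_eq_mul_factorial_le W k

theorem bellBound_mono {c r : ℕ} (hc : 1 ≤ c) (hcr : c ≤ r) : bellBound c ≤ bellBound r := by
  calc bellBound c ≤ ∑ k ∈ range (c + 1), (k : ℝ) ^ r / k ! := by
        refine sum_le_sum fun k _ => ?_
        rcases k.eq_zero_or_pos with rfl | hk
        · simp [zero_pow (by omega : c ≠ 0), zero_pow (by omega : r ≠ 0)]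
        · gcongr
          exact_mod_cast hk
    _ ≤ bellBound r :=
        sum_le_sum_of_subset_of_nonneg (range_subset_range.2 (by omega)) fun _ _ _ => by positivity

theorem sum_bellBound_div_factorial_le (N : ℕ) :
    ∑ r ∈ range N, bellBound r / r ! ≤ Real.exp (Real.exp 1) := by
  calc ∑ r ∈ range N, bellBound r / r !
      ≤ ∑ r ∈ range N, ∑ k ∈ range N, (k : ℝ) ^ r / k ! / r ! := by
        refine sum_le_sum fun r hr => ?_
        rw [bellBound, sum_div]
        exact sum_le_sum_of_subset_of_nonneg (range_subset_range.2 (mem_range.1 hr))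
          fun _ _ _ => by positivity
    _ = ∑ k ∈ range N, (∑ r ∈ range N, (k : ℝ) ^ r / r !) / k ! := by
        rw [sum_comm]
        refine sum_congr rfl fun k _ => ?_
        rw [sum_div]
        exact sum_congr rfl fun r _ => div_right_comm _ _ _
    _ ≤ ∑ k ∈ range N, Real.exp 1 ^ k / k ! := by
        gcongr with k
        rw [Real.exp_one_pow]
        exact Real.sum_le_exp_of_nonneg (Nat.cast_nonneg k) N
    _ ≤ Real.exp (Real.exp 1) := Real.sum_le_exp_of_nonneg (Real.exp_pos 1).le N

theorem exp_exp_one_le_27 : Real.exp (Real.exp 1) ≤ 27 := by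
  have h : Real.exp 1 ≤ 3 := Real.exp_one_lt_d9.le.trans (by norm_num)
  calc Real.exp (Real.exp 1) ≤ Real.exp 1 ^ 3 := by
        rw [Real.exp_one_pow]; exact Real.exp_le_exp.2 (by exact_mod_cast h)
    _ ≤ 27 := (pow_le_pow_left₀ (Real.exp_pos 1).le h 3).trans (by norm_num)

section Partitions

variable {V : Type*}

def mergeClasses (π : Setoid V) (a b : V) : Setoid V where
  r u v := π u v ∨ (π u a ∧ π b v) ∨ (π u b ∧ π a v)
  iseqv := by
    refine ⟨fun u => Or.inl (π.refl u), ?_, ?_⟩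
    · rintro u v (h | ⟨h1, h2⟩ | ⟨h1, h2⟩)
      · exact Or.inl (π.symm h)
      · exact Or.inr (Or.inr ⟨π.symm h2, π.symm h1⟩)
      · exact Or.inr (Or.inl ⟨π.symm h2, π.symm h1⟩)
    · rintro u v w (h | ⟨h1, h2⟩ | ⟨h1, h2⟩) (h' | ⟨h1', h2'⟩ | ⟨h1', h2'⟩)
      · exact Or.inl (π.trans h h')
      · exact Or.inr (Or.inl ⟨π.trans h h1', h2'⟩)
      · exact Or.inr (Or.inr ⟨π.trans h h1', h2'⟩)
      · exact Or.inr (Or.inl ⟨h1, π.trans h2 h'⟩)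
      · exact Or.inl (π.trans (π.trans h1 (π.symm (π.trans h2 h1'))) h2')
      · exact Or.inl (π.trans h1 h2')
      · exact Or.inr (Or.inr ⟨h1, π.trans h2 h'⟩)
      · exact Or.inl (π.trans h1 h2')
      · exact Or.inl (π.trans (π.trans h1 (π.symm (π.trans h2 h1'))) h2')

theorem le_mergeClasses (π : Setoid V) (a b : V) : π ≤ mergeClasses π a b :=
  fun _ _ h => Or.inl h

theorem mergeClasses_le {π s : Setoid V} {a b : V} (hπ : π ≤ s) (hab : s a b) :
    mergeClasses π a b ≤ s := by
  rintro x y (h | ⟨h1, h2⟩ | ⟨h1, h2⟩)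
  · exact hπ h
  · exact s.trans (hπ h1) (s.trans hab (hπ h2))
  · exact s.trans (hπ h1) (s.trans (s.symm hab) (hπ h2))

theorem card_quotient_mergeClasses [Finite V] {π : Setoid V} {a b : V} (hab : ¬ π a b) :
    Nat.card (Quotient (mergeClasses π a b)) + 1 = Nat.card (Quotient π) := by
  let f (z : {z : Quotient π // z ≠ ⟦b⟧}) : Quotient (mergeClasses π a b) :=
    Setoid.map_of_le (le_mergeClasses π a b) z.1
  have hf : Function.Bijective f := by
    constructor
    · rintro ⟨z, hz⟩ ⟨z', hz'⟩ h
      induction z using Quotient.ind with | _ x => ?_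
      induction z' using Quotient.ind with | _ y => ?_
      have hx : ¬ π x b := fun h => hz (Quotient.sound h)
      have hy : ¬ π b y := fun h => hz' (Quotient.sound (π.symm h))
      obtain h | ⟨-, h⟩ | ⟨h, -⟩ := Quotient.exact h
      · exact Subtype.ext (Quotient.sound h)
      · exact absurd h hy
      · exact absurd h hx
    · intro q
      induction q using Quotient.ind with | _ x => ?_
      by_cases hx : π x b
      · refine ⟨⟨⟦a⟧, fun h => hab (Quotient.exact h)⟩, Quotient.sound ?_⟩
        exact Or.inr (Or.inl ⟨π.refl a, π.symm hx⟩)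
      · exact ⟨⟨⟦x⟧, fun h => hx (Quotient.exact h)⟩, rfl⟩
  have := Fintype.ofFinite (Quotient π)
  have hpos : 0 < Fintype.card (Quotient π) := Fintype.card_pos_iff.2 ⟨⟦b⟧⟩
  rw [← Nat.card_congr (Equiv.ofBijective f hf), Nat.card_eq_fintype_card,
    Nat.card_eq_fintype_card, Fintype.card_subtype_compl, Fintype.card_subtype_eq]
  omega

end Partitions

section Cuts

variable {V E : Type*} {ends : E → Sym2 V}

theorem crosses_iff {s : Setoid V} {e : E} {a b : V} (he : ends e = s(a, b)) :
    Crosses ends s e ↔ ¬ s a b := by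
  refine ⟨fun ⟨u, v, huv, hs⟩ hab => hs ?_, fun hab => ⟨a, b, he, hab⟩⟩
  rcases Sym2.eq_iff.1 (he.symm.trans huv) with ⟨rfl, rfl⟩ | ⟨rfl, rfl⟩
  · exact hab
  · exact s.symm hab

variable [Fintype E]

variable (ends) in
noncomputable def crossingEdges (s : Setoid V) : Finset E := {e | Crosses ends s e}

theorem mem_crossingEdges {s : Setoid V} {e : E} :
    e ∈ crossingEdges ends s ↔ Crosses ends s e := by
  simp [crossingEdges]

theorem cutSize_eq_card_crossingEdges (s : Setoid V) :
    cutSize ends s = #(crossingEdges ends s) := by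
  rw [cutSize, Nat.card_eq_fintype_card, Fintype.card_subtype, crossingEdges]

theorem crossingEdges_anti {π s : Setoid V} (h : π ≤ s) :
    crossingEdges ends s ⊆ crossingEdges ends π := by
  intro e
  simp only [mem_crossingEdges]
  exact fun ⟨u, v, he, hs⟩ => ⟨u, v, he, fun hπ => hs (h hπ)⟩

/-- Each class of a partition with at least two classes is one side of a 2-way cut, so it has
at least `χ` edges leaving it; every crossing edge leaves exactly two classes. -/
theorem card_quotient_mul_le_two_mul_card_crossingEdges [Fintype V] {χ : ℕ}
    (hmin : ∀ A : Set V, A.Nonempty → Aᶜ.Nonempty → χ ≤ twoWaySize ends A) {π : Setoid V}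
    (hπ : 2 ≤ Nat.card (Quotient π)) :
    Nat.card (Quotient π) * χ ≤ 2 * #(crossingEdges ends π) := by
  let Leaves (z : Quotient π) (e : E) : Prop :=
    ∃ u v, ends e = s(u, v) ∧ ⟦u⟧ = z ∧ (⟦v⟧ : Quotient π) ≠ z
  rw [Nat.card_eq_fintype_card] at hπ ⊢
  have hclass (z : Quotient π) : χ ≤ #{e | Leaves z e} := by
    obtain ⟨w, rfl⟩ := Quotient.exists_rep z
    obtain ⟨z', hz'⟩ := Fintype.exists_ne_of_one_lt_card hπ ⟦w⟧
    obtain ⟨w', rfl⟩ := Quotient.exists_rep z'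
    have := hmin {v | ⟦v⟧ = ⟦w⟧} ⟨w, rfl⟩ ⟨w', hz'⟩
    rwa [twoWaySize, Nat.card_eq_fintype_card, Fintype.card_subtype] at this
  have hedge (e : E) : #{z | Leaves z e} ≤ 2 := by
    obtain ⟨u, v, h⟩ := (Sym2.exists (f := (ends e = ·))).1 ⟨_, rfl⟩
    refine (card_le_card fun z hz => ?_).trans (card_insert_le (⟦u⟧ : Quotient π) {⟦v⟧})
    obtain ⟨a, b, hab, rfl, -⟩ := (mem_filter.1 hz).2
    rcases Sym2.eq_iff.1 (hab.symm.trans h) with ⟨rfl, -⟩ | ⟨rfl, -⟩ <;> simp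
  have hcross (z : Quotient π) (e : E) (h : Leaves z e) : e ∈ crossingEdges ends π := by
    obtain ⟨u, v, he, rfl, hv⟩ := h
    exact mem_crossingEdges.2 ⟨u, v, he, fun huv => hv (Quotient.sound huv).symm⟩
  calc Fintype.card (Quotient π) * χ = ∑ _z : Quotient π, χ := by simp
    _ ≤ ∑ z : Quotient π, #((crossingEdges ends π).bipartiteAbove Leaves z) := by
        refine sum_le_sum fun z _ => (hclass z).trans_eq (congrArg card ?_)
        ext e
        simp only [bipartiteAbove, mem_filter, mem_univ, true_and]
        exact ⟨fun h => ⟨hcross z e h, h⟩, And.right⟩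
    _ = ∑ e ∈ crossingEdges ends π, #(univ.bipartiteBelow Leaves e) :=
        sum_card_bipartiteAbove_eq_sum_card_bipartiteBelow _
    _ ≤ ∑ _e ∈ crossingEdges ends π, 2 := sum_le_sum fun e _ => hedge e
    _ = 2 * #(crossingEdges ends π) := by rw [sum_const, smul_eq_mul, mul_comm]

end Cuts

section Contraction

noncomputable def contractionWeight (χ r c σ : ℕ) : ℝ :=
  ∏ j ∈ Ioc r c, max 0 (1 - 2 * σ / (j * χ))

theorem contractionWeight_nonneg (χ r c σ : ℕ) : 0 ≤ contractionWeight χ r c σ :=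
  prod_nonneg fun _ _ => le_max_left _ _

theorem contractionWeight_of_le {χ r c σ : ℕ} (h : c ≤ r) :
    contractionWeight χ r c σ = 1 := by
  rw [contractionWeight, Ioc_eq_empty (by omega), prod_empty]

theorem contractionWeight_succ_le {χ r c σ m : ℕ} (hχ : 0 < χ) (hrc : r ≤ c) (hσm : σ ≤ m)
    (hm : 0 < m) (hdeg : (c + 1) * χ ≤ 2 * m) :
    contractionWeight χ r (c + 1) σ ≤ (m - σ) / m * contractionWeight χ r c σ := by
  have hσm' : (σ : ℝ) ≤ m := by exact_mod_cast hσm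
  rw [contractionWeight, prod_Ioc_succ_top hrc, ← contractionWeight, mul_comm]
  refine mul_le_mul_of_nonneg_right (max_le (div_nonneg (by linarith) (by positivity)) ?_)
    (contractionWeight_nonneg ..)
  have hdeg' : ((c + 1 : ℕ) : ℝ) * χ ≤ 2 * m := by exact_mod_cast hdeg
  rw [sub_div, div_self (by positivity), sub_le_sub_iff_left, div_le_div_iff₀ (by positivity)
    (by positivity)]
  nlinarith

variable {V E : Type*} [Fintype V] [Fintype E] {ends : E → Sym2 V} {χ r : ℕ}

theorem sum_contractionWeight_le_of_le [Nonempty V] {π : Setoid V} {c : ℕ}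
    (hπ : Nat.card (Quotient π) = c) (hcr : c ≤ r) :
    ∑ s with π ≤ s, contractionWeight χ r c #(crossingEdges ends s) ≤ bellBound r := by
  have : Nonempty (Quotient π) := Nonempty.map (Quotient.mk π) ‹_›
  have hc : 1 ≤ c := hπ ▸ Nat.card_pos
  simp_rw [contractionWeight_of_le hcr, sum_const, nsmul_one]
  calc (#{s | π ≤ s} : ℝ) = Nat.card (Setoid (Quotient π)) := by
        rw [← Nat.card_congr (Setoid.correspondence π).toEquiv, Nat.card_eq_fintype_card,
          Fintype.card_subtype]
    _ ≤ bellBound c := hπ ▸ card_setoid_le_bellBound _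
    _ ≤ bellBound r := bellBound_mono hc hcr

/-- One contraction step: for a partition `π` with `c + 1` classes and `m` crossing edges, the
weight of each coarser `s` is spread over the `m - σ` crossing edges of `π` not crossing `s`;
grouping by edge, the edge `ab` collects the partitions coarser than `π` with `a, b` merged. -/
theorem sum_contractionWeight_succ_le (hχ : 0 < χ)
    (hmin : ∀ A : Set V, A.Nonempty → Aᶜ.Nonempty → χ ≤ twoWaySize ends A) (hr : 1 ≤ r)
    {c : ℕ} (hrc : r ≤ c) {π : Setoid V} (hπ : Nat.card (Quotient π) = c + 1)
    (ih : ∀ π' : Setoid V, Nat.card (Quotient π') = c →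
      ∑ s with π' ≤ s, contractionWeight χ r c #(crossingEdges ends s) ≤ bellBound r) :
    ∑ s with π ≤ s, contractionWeight χ r (c + 1) #(crossingEdges ends s) ≤ bellBound r := by
  set m := #(crossingEdges ends π)
  have hdeg : (c + 1) * χ ≤ 2 * m :=
    hπ ▸ card_quotient_mul_le_two_mul_card_crossingEdges hmin (by omega)
  have hm : 0 < m := by nlinarith
  calc ∑ s with π ≤ s, contractionWeight χ r (c + 1) #(crossingEdges ends s)
      ≤ ∑ s with π ≤ s, ∑ e ∈ crossingEdges ends π \ crossingEdges ends s,
          contractionWeight χ r c #(crossingEdges ends s) / m := by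
        refine sum_le_sum fun s hs => ?_
        have hsub := crossingEdges_anti (mem_filter.1 hs).2 (ends := ends)
        rw [sum_const, card_sdiff_of_subset hsub, nsmul_eq_mul,
          Nat.cast_sub (card_le_card hsub), mul_div, mul_div_right_comm]
        exact contractionWeight_succ_le hχ hrc (card_le_card hsub) hm hdeg
    _ = ∑ e ∈ crossingEdges ends π, ∑ s with π ≤ s ∧ e ∉ crossingEdges ends s,
          contractionWeight χ r c #(crossingEdges ends s) / m := by
        refine sum_comm' fun s e => ?_
        simp only [mem_filter, mem_univ, true_and, mem_sdiff]
        exact ⟨fun ⟨hs, he, hes⟩ => ⟨⟨hs, hes⟩, he⟩, fun ⟨⟨hs, hes⟩, he⟩ => ⟨hs, he, hes⟩⟩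
    _ ≤ ∑ _e ∈ crossingEdges ends π, bellBound r / m := by
        refine sum_le_sum fun e he => ?_
        rw [← sum_div]
        gcongr
        obtain ⟨a, b, hab, hnab⟩ := mem_crossingEdges.1 he
        refine (sum_le_sum_of_subset_of_nonneg (fun s hs => ?_) fun _ _ _ =>
          contractionWeight_nonneg ..).trans (ih (mergeClasses π a b) (by
            have := card_quotient_mergeClasses hnab; omega))
        simp only [mem_filter, mem_univ, true_and, mem_crossingEdges, crosses_iff hab,
          not_not] at hs ⊢
        exact mergeClasses_le hs.1 hs.2
    _ = bellBound r := by
        rw [sum_const, nsmul_eq_mul]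
        exact mul_div_cancel₀ _ (by positivity)

theorem sum_contractionWeight_le_bellBound [Nonempty V] (hχ : 0 < χ)
    (hmin : ∀ A : Set V, A.Nonempty → Aᶜ.Nonempty → χ ≤ twoWaySize ends A) (hr : 1 ≤ r)
    (π : Setoid V) :
    ∑ s with π ≤ s, contractionWeight χ r (Nat.card (Quotient π)) #(crossingEdges ends s)
      ≤ bellBound r := by
  generalize hc : Nat.card (Quotient π) = c
  induction c generalizing π with
  | zero => exact sum_contractionWeight_le_of_le hc (Nat.zero_le r)
  | succ c ih =>
    rcases le_or_gt (c + 1) r with hcr | hrc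
    · exact sum_contractionWeight_le_of_le hc hcr
    · exact sum_contractionWeight_succ_le hχ hmin hr (by omega) hc ih

end Contraction

theorem factorial_mul_prod_Ioc_sub {k r n : ℕ} (hkr : k ≤ r) (hrn : r ≤ n) :
    ((r - k) ! : ℝ) * ∏ j ∈ Ioc r n, ((j : ℝ) - k) = (n - k) ! := by
  induction n, hrn using Nat.le_induction with
  | base => simp
  | succ n hrn ih =>
    rw [prod_Ioc_succ_top hrn, ← mul_assoc, ih, show n + 1 - k = n - k + 1 by omega,
      Nat.factorial_succ]
    push_cast [show k ≤ n by omega]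
    ring

theorem factorial_le_pow_mul_factorial_sub {k n : ℕ} (h : k ≤ n) : n ! ≤ n ^ k * (n - k) ! := by
  rw [← Nat.factorial_mul_descFactorial h, mul_comm]
  exact Nat.mul_le_mul_right _ (Nat.descFactorial_le_pow n k)

theorem factorial_le_pow_mul_prod_Ioc {k r n : ℕ} (hkr : k ≤ r) (hrk : r ≤ k + 1) (hrn : r ≤ n) :
    (r ! : ℝ) ≤ n ^ k * ∏ j ∈ Ioc r n, (1 - k / j : ℝ) := by
  have hpos : ∀ j ∈ Ioc r n, (0 : ℝ) < j := fun j hj => by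
    exact_mod_cast (show 0 < j by simp at hj; omega)
  have hnum := factorial_mul_prod_Ioc_sub hkr hrn
  have hden := factorial_mul_prod_Ioc_sub (Nat.zero_le r) hrn
  rw [Nat.factorial_eq_one.2 (by omega), Nat.cast_one, one_mul] at hnum
  simp only [Nat.sub_zero, CharP.cast_eq_zero, sub_zero] at hden
  rw [prod_congr rfl fun j hj => one_sub_div (hpos j hj).ne', prod_div_distrib, hnum,
    mul_div_assoc', le_div_iff₀ (prod_pos hpos), hden]
  exact_mod_cast factorial_le_pow_mul_factorial_sub (hkr.trans hrn)

/-- Weighted AM-GM in each factor interpolates between the bounds at the integer endpoints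
`x = r - 1` and `x = r`. -/
theorem factorial_mul_rpow_neg_le_prod_Ioc {r n : ℕ} {x : ℝ} (hr : 1 ≤ r) (hrn : r ≤ n)
    (hx1 : r - 1 ≤ x) (hx2 : x ≤ r) :
    r ! * (n : ℝ) ^ (-x) ≤ ∏ j ∈ Ioc r n, (1 - x / j) := by
  have hn : (0 : ℝ) < n := by exact_mod_cast (show 0 < n by omega)
  have hfac : (0 : ℝ) < r ! := by exact_mod_cast r.factorial_pos
  have hnonneg (y : ℝ) (hy : y ≤ r) : ∀ j ∈ Ioc r n, 0 ≤ 1 - y / j := fun j hj => by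
    have hj : (r : ℝ) + 1 ≤ j := by exact_mod_cast (mem_Ioc.1 hj).1
    rw [sub_nonneg, div_le_one (by linarith)]
    linarith
  have hend (k : ℕ) (hkr : k ≤ r) (hrk : r ≤ k + 1) :
      r ! * (n : ℝ) ^ (-(k : ℝ)) ≤ ∏ j ∈ Ioc r n, (1 - k / j : ℝ) := by
    rw [Real.rpow_neg hn.le, Real.rpow_natCast, ← div_eq_mul_inv, div_le_iff₀' (by positivity)]
    exact factorial_le_pow_mul_prod_Ioc hkr hrk hrn
  have hr1 : ((r - 1 : ℕ) : ℝ) = r - 1 := by push_cast [hr]; ring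
  set t := x - (r - 1)
  have ht0 : 0 ≤ t := by linarith
  have ht1 : 0 ≤ 1 - t := by linarith
  calc r ! * (n : ℝ) ^ (-x)
      = (r ! * (n : ℝ) ^ (-(r : ℝ))) ^ t * (r ! * (n : ℝ) ^ (-((r - 1 : ℕ) : ℝ))) ^ (1 - t) := by
        rw [Real.mul_rpow hfac.le (by positivity), Real.mul_rpow hfac.le (by positivity),
          ← Real.rpow_mul hn.le, ← Real.rpow_mul hn.le, hr1, mul_mul_mul_comm,
          ← Real.rpow_add hfac, ← Real.rpow_add hn, add_sub_cancel, Real.rpow_one]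
        congr 2
        ring
    _ ≤ (∏ j ∈ Ioc r n, (1 - r / j : ℝ)) ^ t
          * (∏ j ∈ Ioc r n, (1 - ((r - 1 : ℕ) : ℝ) / j)) ^ (1 - t) := by
        refine mul_le_mul (Real.rpow_le_rpow (by positivity) (hend r le_rfl (by omega)) ht0)
          (Real.rpow_le_rpow (by positivity) (hend (r - 1) (by omega) (by omega)) ht1)
          (by positivity) (Real.rpow_nonneg (prod_nonneg (hnonneg _ le_rfl)) _)
    _ = ∏ j ∈ Ioc r n, (1 - r / j : ℝ) ^ t * (1 - (r - 1) / j) ^ (1 - t) := by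
        rw [hr1, ← Real.finsetProd_rpow _ _ (hnonneg _ le_rfl),
          ← Real.finsetProd_rpow _ _ (hnonneg _ (by linarith)), prod_mul_distrib]
    _ ≤ ∏ j ∈ Ioc r n, (1 - x / j) := by
        refine prod_le_prod (fun j hj => mul_nonneg (Real.rpow_nonneg (hnonneg _ le_rfl j hj) _)
          (Real.rpow_nonneg (hnonneg _ (by linarith) j hj) _)) fun j hj => ?_
        refine (Real.geom_mean_le_arith_mean2_weighted ht0 ht1 (hnonneg _ le_rfl j hj)
          (hnonneg _ (by linarith) j hj) (by ring)).trans_eq ?_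
        ring

theorem factorial_mul_rpow_neg_le_contractionWeight {χ n σ r : ℕ} {x : ℝ} (hχ : 0 < χ)
    (hn : 1 ≤ n) (hσ : 0 < σ) (hx : x = 2 * σ / χ) (hr : r = min ⌈x⌉₊ n) :
    r ! * (n : ℝ) ^ (-x) ≤ contractionWeight χ r n σ := by
  have hx0 : 0 < x := hx ▸ by positivity
  rcases le_or_gt x n with hxn | hnx
  · rw [min_eq_left (Nat.ceil_le.2 hxn)] at hr
    subst hr
    have hweight : contractionWeight χ ⌈x⌉₊ n σ = ∏ j ∈ Ioc ⌈x⌉₊ n, (1 - x / j) := by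
      refine prod_congr rfl fun j hj => ?_
      have hj : x < j := (Nat.le_ceil x).trans_lt (by exact_mod_cast (mem_Ioc.1 hj).1)
      have harg : 2 * (σ : ℝ) / (j * χ) = x / j := by rw [hx, div_div, mul_comm (j : ℝ)]
      rw [harg, max_eq_right (sub_nonneg.2 ((div_le_one (hx0.trans hj)).2 hj.le))]
    rw [hweight]
    exact factorial_mul_rpow_neg_le_prod_Ioc (Nat.one_le_iff_ne_zero.2 (by positivity))
      (Nat.ceil_le.2 hxn) (by linarith [Nat.ceil_lt_add_one hx0.le]) (Nat.le_ceil x)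
  · have hnr : n ≤ ⌈x⌉₊ := by exact_mod_cast hnx.le.trans (Nat.le_ceil x)
    rw [hr, min_eq_right hnr]
    have hn0 : (1 : ℝ) ≤ n := by exact_mod_cast hn
    rw [contractionWeight_of_le le_rfl]
    calc (n ! : ℝ) * (n : ℝ) ^ (-x) ≤ n ! * (n : ℝ) ^ (-(n : ℝ)) := by
          gcongr
      _ ≤ 1 := by
          rw [Real.rpow_neg (by positivity), Real.rpow_natCast, ← div_eq_mul_inv,
            div_le_one (by positivity)]
          exact_mod_cast Nat.factorial_le_pow n

theorem pow_le_contractionWeight_mul {χ n σ r : ℕ} {p η α : ℝ} (hχ : 0 < χ) (hn : 1 ≤ n)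
    (hp : 0 ≤ p) (hη : p ^ χ = (n : ℝ) ^ (-(2 + η))) (hη0 : 0 ≤ η) (hα : 0 < α)
    (hσ : α * χ ≤ σ) (hr : r = min ⌈(2 * σ / χ : ℝ)⌉₊ n) :
    p ^ σ ≤ contractionWeight χ r n σ / r ! * (n : ℝ) ^ (-(α * η)) := by
  have hn0 : (1 : ℝ) ≤ n := by exact_mod_cast hn
  have hχ0 : (0 : ℝ) < χ := by exact_mod_cast hχ
  have hσ0 : 0 < σ := by exact_mod_cast (show (0 : ℝ) < σ by nlinarith)
  have hsplit : p ^ σ = (n : ℝ) ^ (-(2 * σ / χ : ℝ)) * (n : ℝ) ^ (-(η * (σ / χ))) := by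
    have hσχ : p ^ σ = (p ^ χ) ^ ((σ : ℝ) / χ) := by
      rw [← Real.rpow_natCast p χ, ← Real.rpow_mul hp, mul_div_cancel₀ _ hχ0.ne',
        Real.rpow_natCast]
    rw [hσχ, hη, ← Real.rpow_mul (by positivity), ← Real.rpow_add (by positivity)]
    congr 1
    ring
  have hweight : (n : ℝ) ^ (-(2 * σ / χ : ℝ)) ≤ contractionWeight χ r n σ / r ! := by
    rw [le_div_iff₀ (by positivity), mul_comm]
    exact factorial_mul_rpow_neg_le_contractionWeight hχ hn hσ0 rfl hr
  have hexcess : (n : ℝ) ^ (-(η * (σ / χ))) ≤ (n : ℝ) ^ (-(α * η)) := by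
    refine Real.rpow_le_rpow_of_exponent_le hn0 (neg_le_neg ?_)
    rw [mul_comm]
    exact mul_le_mul_of_nonneg_left ((le_div_iff₀ hχ0).2 hσ) hη0
  rw [hsplit]
  exact mul_le_mul hweight hexcess (by positivity)
    (div_nonneg (contractionWeight_nonneg ..) (by positivity))

section Charging

variable {V E : Type*} [Fintype V] [Fintype E] {ends : E → Sym2 V} {χ : ℕ}

theorem card_quotient_bot : Nat.card (Quotient (⊥ : Setoid V)) = Fintype.card V := by
  rw [Nat.card_congr Setoid.quotientBotEquiv, Nat.card_eq_fintype_card]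

theorem sum_pow_card_crossingEdges_le [Nonempty V] (hχ : 0 < χ)
    (hmin : ∀ A : Set V, A.Nonempty → Aᶜ.Nonempty → χ ≤ twoWaySize ends A) {p η α : ℝ}
    (hp : 0 ≤ p) (hη : p ^ χ = (Fintype.card V : ℝ) ^ (-(2 + η))) (hη0 : 0 ≤ η) (hα : 0 < α) :
    ∑ s with α * χ ≤ #(crossingEdges ends s), p ^ #(crossingEdges ends s)
      ≤ Real.exp (Real.exp 1) * (Fintype.card V : ℝ) ^ (-(α * η)) := by
  set n := Fintype.card V
  have hn : 1 ≤ n := Fintype.card_pos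
  set K := (n : ℝ) ^ (-(α * η))
  set T : Finset (Setoid V) := {s | α * χ ≤ #(crossingEdges ends s)}
  let level (s : Setoid V) : ℕ := min ⌈(2 * #(crossingEdges ends s) / χ : ℝ)⌉₊ n
  have hlevel : ∀ s ∈ T, level s ∈ Icc 1 n := fun s hs => by
    have hσ : α * χ ≤ #(crossingEdges ends s) := (mem_filter.1 hs).2
    have : (0 : ℝ) < 2 * #(crossingEdges ends s) / χ := by
      have : (0 : ℝ) < χ := by exact_mod_cast hχ
      have : (0 : ℝ) < #(crossingEdges ends s) := by nlinarith
      positivity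
    exact mem_Icc.2 ⟨le_min (Nat.one_le_ceil_iff.2 this) hn, min_le_right _ _⟩
  calc ∑ s ∈ T, p ^ #(crossingEdges ends s)
      ≤ ∑ s ∈ T, contractionWeight χ (level s) n #(crossingEdges ends s) / (level s) ! * K :=
        sum_le_sum fun s hs =>
          pow_le_contractionWeight_mul hχ hn hp hη hη0 hα (mem_filter.1 hs).2 rfl
    _ = (∑ r ∈ Icc 1 n, ∑ s ∈ T with level s = r,
          contractionWeight χ r n #(crossingEdges ends s) / r !) * K := by
        rw [← sum_mul, ← sum_fiberwise_of_maps_to hlevel]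
        congr 1
        refine sum_congr rfl fun r _ => sum_congr rfl fun s hs => ?_
        rw [(mem_filter.1 hs).2]
    _ ≤ (∑ r ∈ Icc 1 n, bellBound r / r !) * K := by
        gcongr with r hr
        rw [← sum_div]
        gcongr
        calc ∑ s ∈ T with level s = r, contractionWeight χ r n #(crossingEdges ends s)
            ≤ ∑ s with ⊥ ≤ s, contractionWeight χ r (Nat.card (Quotient (⊥ : Setoid V)))
                #(crossingEdges ends s) := by
              rw [card_quotient_bot]
              exact sum_le_sum_of_subset_of_nonneg (by simp) fun _ _ _ =>
                contractionWeight_nonneg ..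
          _ ≤ bellBound r := sum_contractionWeight_le_bellBound hχ hmin (mem_Icc.1 hr).1 ⊥
    _ ≤ Real.exp (Real.exp 1) * K := by
        gcongr
        refine (sum_le_sum_of_subset_of_nonneg (fun r hr => ?_) fun r _ _ => ?_).trans
          (sum_bellBound_div_factorial_le (n + 1))
        · exact mem_range.2 (by have := (mem_Icc.1 hr).2; omega)
        · have : 0 ≤ bellBound r := sum_nonneg fun _ _ => by positivity
          positivity

end Charging

theorem measure_forall_eq_true_eq_ofReal_pow {Ω ι : Type*} [MeasurableSpace Ω] {P : Measure Ω}
    {X : ι → Ω → Bool} (hX : iIndepFun X P) {p : ℝ} (hp : 0 ≤ p)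
    (hprob : ∀ i, P {ω | X i ω = true} = ENNReal.ofReal p) (S : Finset ι) :
    P {ω | ∀ i ∈ S, X i ω = true} = ENNReal.ofReal (p ^ #S) := by
  calc P {ω | ∀ i ∈ S, X i ω = true} = P (⋂ i ∈ S, X i ⁻¹' {true}) := by
        congr 1
        ext ω
        simp
    _ = ∏ i ∈ S, P (X i ⁻¹' {true}) := hX.meas_biInter fun i _ => ⟨{true}, trivial, rfl⟩
    _ = ENNReal.ofReal (p ^ #S) := (prod_congr rfl fun i _ => hprob i).trans <| by
        rw [prod_const, ENNReal.ofReal_pow hp]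

end Karger

open Karger

theorem large_compact_cuts_unlikely_general {V E : Type*} [Fintype V] [Fintype E]
    {Ω : Type*} [MeasurableSpace Ω] (P : Measure Ω)
    (ends : E → Sym2 V) (n : ℕ) (hn : Fintype.card V = n) (hn2 : 2 ≤ n)
    (χ : ℕ) (hχ1 : 1 ≤ χ)
    (hχ : IsLeast {k : ℕ | ∃ A : Set V,
      A.Nonempty ∧ Aᶜ.Nonempty ∧ k = twoWaySize ends A} χ)
    (p η : ℝ) (hp0 : 0 < p)
    (heavy : E → Ω → Bool)
    (hindep : iIndepFun heavy P)
    (hprob : ∀ e, P {ω | heavy e ω = true} = ENNReal.ofReal p)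
    (hη : p ^ χ = (n : ℝ) ^ (-(2 + η)))
    (hηpos : 0 < η)
    (α : ℝ) (hα : 1 ≤ α) :
    P {ω | ∃ s : Setoid V, IsCompactCut ends s ∧ α * χ ≤ (cutSize ends s : ℝ) ∧
        ∀ e, Crosses ends s e → heavy e ω = true}
      ≤ ENNReal.ofReal (49 * (n : ℝ) ^ (-(α * η))) := by
  subst hn
  have : Nonempty V := Fintype.card_pos_iff.1 (by omega)
  have hmin : ∀ A : Set V, A.Nonempty → Aᶜ.Nonempty → χ ≤ twoWaySize ends A :=
    fun A hA hAc => hχ.2 ⟨A, hA, hAc, rfl⟩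
  let AllHeavy (s : Setoid V) : Set Ω := {ω | ∀ e ∈ crossingEdges ends s, heavy e ω = true}
  calc _ ≤ P (⋃ s ∈ ({s | α * χ ≤ #(crossingEdges ends s)} : Finset (Setoid V)),
          AllHeavy s) := by
        refine measure_mono fun ω ⟨s, _, hs, hheavy⟩ => Set.mem_iUnion₂.2 ⟨s, ?_, ?_⟩
        · simpa [← cutSize_eq_card_crossingEdges] using hs
        · exact fun e he => hheavy e (mem_crossingEdges.1 he)
    _ ≤ ∑ s with α * χ ≤ #(crossingEdges ends s), P (AllHeavy s) :=
        measure_biUnion_finset_le _ _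
    _ = ENNReal.ofReal (∑ s with α * χ ≤ #(crossingEdges ends s),
          p ^ #(crossingEdges ends s)) := by
        rw [ENNReal.ofReal_sum_of_nonneg fun _ _ => by positivity]
        exact sum_congr rfl fun s _ =>
          measure_forall_eq_true_eq_ofReal_pow hindep hp0.le hprob _
    _ ≤ ENNReal.ofReal (49 * (Fintype.card V : ℝ) ^ (-(α * η))) := by
        refine ENNReal.ofReal_le_ofReal ((sum_pow_card_crossingEdges_le hχ1 hmin hp0.le hη
          hηpos.le (by linarith)).trans ?_)
        gcongr
        linarith [exp_exp_one_le_27]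

/-- **Large compact cuts are unlikely.** Let `G` be a finite connected multigraph on
`n ≥ 2` vertices with minimum (2-way) cut size `χ ≥ 1`, in which each edge independently
becomes heavy with probability `p ∈ (0,1)`. Writing `p^χ = n^(-(2+η))` with `η > 0`, for
every real `α ≥ 1` the probability that some compact cut of size at least `α·χ` has all
its crossing edges heavy is at most `49 · n^(-αη)`. -/
theorem large_compact_cuts_unlikely {V E : Type*} [Fintype V] [Fintype E]
    {Ω : Type*} [MeasurableSpace Ω] (P : Measure Ω) [IsProbabilityMeasure P]
    (ends : E → Sym2 V) (n : ℕ) (hn : Fintype.card V = n) (hn2 : 2 ≤ n)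
    (hconn : ConnectedOn ends Set.univ)
    (χ : ℕ) (hχ1 : 1 ≤ χ)
    (hχ : IsLeast {k : ℕ | ∃ A : Set V,
      A.Nonempty ∧ Aᶜ.Nonempty ∧ k = twoWaySize ends A} χ)
    (p η : ℝ) (hp0 : 0 < p) (hp1 : p < 1)
    (heavy : E → Ω → Bool)
    (hmeas : ∀ e, Measurable (heavy e))
    (hindep : iIndepFun heavy P)
    (hprob : ∀ e, P {ω | heavy e ω = true} = ENNReal.ofReal p)
    (hη : p ^ χ = (n : ℝ) ^ (-(2 + η)))
    (hηpos : 0 < η)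
    (α : ℝ) (hα : 1 ≤ α) :
    P {ω | ∃ s : Setoid V, IsCompactCut ends s ∧ α * χ ≤ (cutSize ends s : ℝ) ∧
        ∀ e, Crosses ends s e → heavy e ω = true}
      ≤ ENNReal.ofReal (49 * (n : ℝ) ^ (-(α * η))) :=
  large_compact_cuts_unlikely_general P ends n hn hn2 χ hχ1 hχ p η hp0 heavy hindep hprob hη hηpos α
    hα
end

section
/- Let c = (5 + √17)/2, let n ≥ 2 be an integer, let 0 < ε ≤ 1, let γ > 0 be real, let η ≥ c − 2, and set α = (c − 1 + ln(1/ε)/ln n)/2. If (4γ)⁴ ≤ (1/ε)^{c−4}, then γ·n^{−αη} ≤ (ε/4)·n^{−(2+η)}. -/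
/-- The numeric inequality underlying the corollary that large compact cuts can be ignored:
with `c = (5 + √17)/2` and `α = (c - 1 + ln(1/ε)/ln n)/2`, if `(4γ)⁴ ≤ (1/ε)^(c-4)` and
`η ≥ c - 2`, then `γ · n^(-αη) ≤ (ε/4) · n^(-(2+η))`. -/
theorem large_cuts_numeric (n : ℕ) (hn : 2 ≤ n) (ε γ η α : ℝ)
    (hε0 : 0 < ε) (hε1 : ε ≤ 1) (hγ : 0 < γ)
    (hη : (5 + Real.sqrt 17) / 2 - 2 ≤ η)
    (hα : α = ((5 + Real.sqrt 17) / 2 - 1 + Real.log (1 / ε) / Real.log n) / 2)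
    (hγε : (4 * γ) ^ (4 : ℕ) ≤ (1 / ε) ^ ((5 + Real.sqrt 17) / 2 - 4 : ℝ)) :
    γ * (n : ℝ) ^ (-(α * η)) ≤ (ε / 4) * (n : ℝ) ^ (-(2 + η)) := by
  have hs2 : Real.sqrt 17 ^ 2 = 17 := Real.sq_sqrt (by norm_num)
  set s := Real.sqrt 17 with hsdef
  have hs4 : 4 ≤ s := by nlinarith [Real.sqrt_nonneg 17]
  set c : ℝ := (5 + s) / 2 with hc
  have hc4 : 4 ≤ c := by rw [hc]; linarith
  have hn1 : (1:ℝ) < (n:ℝ) := by exact_mod_cast Nat.lt_of_lt_of_le one_lt_two hn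
  have hn0 : (0:ℝ) < (n:ℝ) := by linarith
  have hL : 0 < Real.log n := Real.log_pos hn1
  set t : ℝ := Real.log (1/ε) / Real.log n with ht
  have hinv1 : (1:ℝ) ≤ 1/ε := by rw [le_div_iff₀ hε0]; linarith
  have hinv0 : (0:ℝ) < 1/ε := by positivity
  have ht0 : 0 ≤ t := div_nonneg (Real.log_nonneg hinv1) hL.le
  have hnt : (n:ℝ) ^ t = 1/ε := by
    rw [Real.rpow_def_of_pos hn0, mul_comm, ht, div_mul_cancel₀ _ hL.ne', Real.exp_log hinv0]
  -- bound on gamma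
  have h4γ : 4 * γ ≤ (1/ε) ^ ((c - 4)/4 : ℝ) := by
    have h1 : ((4*γ) ^ ((4:ℕ):ℝ)) ^ ((1:ℝ)/4) ≤ ((1/ε)^(c-4 : ℝ)) ^ ((1:ℝ)/4) := by
      rw [Real.rpow_natCast]
      exact Real.rpow_le_rpow (by positivity) hγε (by norm_num)
    rwa [← Real.rpow_mul (by positivity), ← Real.rpow_mul hinv0.le,
      show (((4:ℕ):ℝ) * (1/4)) = 1 by norm_num, Real.rpow_one,
      show ((c-4) * (1/4) : ℝ) = (c-4)/4 by ring] at h1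
  -- exponent inequality
  have hexp : t * c / 4 ≤ α * η - (2 + η) := by
    have hα1 : (c - 3 + t)/2 ≤ α - 1 := by rw [hα, hc]; ring_nf; linarith
    have hη0 : 0 < η := by nlinarith
    have h1 : (c - 2) * ((c - 3 + t)/2) ≤ η * (α - 1) := by
      apply mul_le_mul (by linarith) hα1 (by nlinarith) hη0.le
    have hcc : (c - 2) * (c - 3) = 4 := by rw [hc]; nlinarith
    nlinarith [mul_nonneg ht0 (by linarith : (0:ℝ) ≤ c - 4)]
  -- key chain
  have hkey : 4 * γ ≤ ε * (n:ℝ) ^ (α * η - (2 + η)) := by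
    calc 4 * γ ≤ (1/ε) ^ ((c - 4)/4 : ℝ) := h4γ
      _ = ε * (n:ℝ) ^ (t * c / 4) := by
          rw [show t * c / 4 = t * (c/4) by ring, Real.rpow_mul hn0.le, hnt,
            show (c/4 : ℝ) = (c-4)/4 + 1 by ring, Real.rpow_add hinv0, Real.rpow_one]
          field_simp
      _ ≤ ε * (n:ℝ) ^ (α * η - (2 + η)) := by
          exact mul_le_mul_of_nonneg_left ((Real.rpow_le_rpow_left_iff hn1).mpr hexp) hε0.le
  -- finish
  have hpow : (0:ℝ) < (n:ℝ) ^ (-(α * η)) := Real.rpow_pos_of_pos hn0 _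
  have hmul := mul_le_mul_of_nonneg_right hkey hpow.le
  calc γ * (n:ℝ) ^ (-(α * η)) = (4 * γ) * (n:ℝ) ^ (-(α * η)) / 4 := by ring
    _ ≤ (ε * (n:ℝ) ^ (α * η - (2 + η))) * (n:ℝ) ^ (-(α * η)) / 4 := by linarith
    _ = (ε / 4) * (n:ℝ) ^ (-(2 + η)) := by
        rw [mul_assoc, ← Real.rpow_add hn0]
        ring_nf
end

section
/- Let m ≥ 2 be an integer, let W₁ < W₂ < ⋯ < W_m be nonnegative reals, and let p₁, …, p_m be strictly positive reals with ∑_{i=1}^m p_i = 1. For 1 ≤ i ≤ m−1 set q_i = (1 − ∑_{j=1}^{i} p_j)/(1 − ∑_{j=1}^{i−1} p_j), and let Y₁, …, Y_{m−1} be independent random variables where Y_i takes the value W_m with probability q_i and the value W_i with probability 1 − q_i. Then the random variable M = min{Y₁, …, Y_{m−1}} satisfies Pr(M = W_i) = p_i for every 1 ≤ i ≤ m. -/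
/-!
Almost surely each coin `Y_j` takes only its heavy value `W_m` and its light value `W_j`, and the
light values increase with `j`. So the minimum is `W_k` (`k < m`) exactly when the coins before `k`
are heavy and coin `k` is light, and it is `W_m` exactly when all coins are heavy; by independence
these events have probability `q₁ ⋯ q_{k-1} (1 - q_k)` and `q₁ ⋯ q_{m-1}`. The product
`q₁ ⋯ q_{k-1}` telescopes to the tail mass `1 - (p₁ + ⋯ + p_{k-1})`, which turns both
probabilities into `p_k`.
-/

open MeasureTheory ProbabilityTheory Finset

section Minimum

variable {ι α : Type*} [Finite ι] [ConditionallyCompleteLinearOrder α]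

theorem ciInf_eq_iff_of_finite [Nonempty ι] (f : ι → α) (c : α) :
    ⨅ i, f i = c ↔ (∃ i, f i = c) ∧ ∀ i, c ≤ f i := by
  constructor
  · rintro rfl
    exact ⟨exists_eq_ciInf_of_finite, ciInf_le (Set.finite_range f).bddBelow⟩
  · rintro ⟨⟨i, rfl⟩, h⟩
    exact le_antisymm (ciInf_le (Set.finite_range f).bddBelow i) (le_ciInf h)

variable {y : ι → α} {a : α} {b : ι → α}

theorem ciInf_eq_iff_forall_eq_of_two_valued [Nonempty ι] (hba : ∀ j, b j < a)
    (hy : ∀ j, y j = a ∨ y j = b j) : ⨅ j, y j = a ↔ ∀ j, y j = a := by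
  rw [ciInf_eq_iff_of_finite]
  constructor
  · rintro ⟨-, hle⟩ j
    exact (hy j).resolve_right fun h => (hle j).not_gt (h ▸ hba j)
  · intro h
    obtain ⟨j⟩ := ‹Nonempty ι›
    exact ⟨⟨j, h j⟩, fun j => (h j).ge⟩

theorem ciInf_eq_iff_of_two_valued [LinearOrder ι] (hb : StrictMono b) (hba : ∀ j, b j < a)
    (hy : ∀ j, y j = a ∨ y j = b j) (k : ι) :
    ⨅ j, y j = b k ↔ (∀ j < k, y j = a) ∧ y k = b k := by
  have : Nonempty ι := ⟨k⟩
  rw [ciInf_eq_iff_of_finite]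
  constructor
  · rintro ⟨⟨j₀, hj₀⟩, hle⟩
    have hj₀k : j₀ = k := by
      rcases hy j₀ with h | h
      · exact absurd (h ▸ hj₀) (hba k).ne'
      · exact hb.injective (h ▸ hj₀)
    refine ⟨fun j hj => (hy j).resolve_right fun h => ?_, hj₀k ▸ hj₀⟩
    exact (hle j).not_gt (h ▸ hb hj)
  · rintro ⟨hlt, hk⟩
    refine ⟨⟨k, hk⟩, fun j => ?_⟩
    rcases lt_trichotomy j k with hjk | rfl | hkj
    · exact (hlt j hjk).symm ▸ (hba k).le
    · exact hk.ge
    · rcases hy j with h | h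
      · exact h ▸ (hba k).le
      · exact h ▸ (hb hkj).le

end Minimum

section BiasedCoins

variable {Ω β ι : Type*} [MeasurableSpace Ω] {P : Measure Ω} [IsProbabilityMeasure P]

theorem ae_eq_or_eq_of_measure_add_measure_eq_one [MeasurableSpace β]
    [MeasurableSingletonClass β] {X : Ω → β} (hX : Measurable X) {a b : β} (hab : a ≠ b)
    (h : P {ω | X ω = a} + P {ω | X ω = b} = 1) : ∀ᵐ ω ∂P, X ω = a ∨ X ω = b := by
  have hdisj : Disjoint {ω | X ω = a} {ω | X ω = b} :=
    Set.disjoint_left.2 fun ω ha hb => hab (ha.symm.trans hb)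
  have hmeas : MeasurableSet {ω | X ω = b} := hX (measurableSet_singleton b)
  rw [ae_iff_measure_eq (p := fun ω => X ω = a ∨ X ω = b)
      ((hX (measurableSet_singleton a)).union hmeas).nullMeasurableSet, Set.ofPred_or,
    measure_union hdisj hmeas, h, measure_univ]

variable [Fintype ι] {Y : ι → Ω → ℝ} {a : ℝ} {b : ι → ℝ} {q : ι → ℝ}

theorem ae_forall_eq_or_eq (hmeas : ∀ j, Measurable (Y j)) (hab : ∀ j, a ≠ b j)
    (hq0 : ∀ j, 0 ≤ q j) (hq1 : ∀ j, q j ≤ 1)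
    (hheavy : ∀ j, P {ω | Y j ω = a} = ENNReal.ofReal (q j))
    (hlight : ∀ j, P {ω | Y j ω = b j} = ENNReal.ofReal (1 - q j)) :
    ∀ᵐ ω ∂P, ∀ j, Y j ω = a ∨ Y j ω = b j := by
  refine ae_all_iff.2 fun j => ae_eq_or_eq_of_measure_add_measure_eq_one (hmeas j) (hab j) ?_
  rw [hheavy, hlight, ← ENNReal.ofReal_add (hq0 j) (sub_nonneg.2 (hq1 j)), add_sub_cancel,
    ENNReal.ofReal_one]

theorem measure_ciInf_eq_heavy [Nonempty ι] (hmeas : ∀ j, Measurable (Y j))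
    (hindep : iIndepFun Y P) (hba : ∀ j, b j < a) (hq0 : ∀ j, 0 ≤ q j)
    (hq1 : ∀ j, q j ≤ 1)
    (hheavy : ∀ j, P {ω | Y j ω = a} = ENNReal.ofReal (q j))
    (hlight : ∀ j, P {ω | Y j ω = b j} = ENNReal.ofReal (1 - q j)) :
    P {ω | ⨅ j, Y j ω = a} = ENNReal.ofReal (∏ j, q j) := by
  have hevent : {ω | ⨅ j, Y j ω = a} =ᵐ[P] ⋂ j ∈ (univ : Finset ι), Y j ⁻¹' {a} := by
    rw [Filter.eventuallyEq_set]
    filter_upwards [ae_forall_eq_or_eq hmeas (fun j => (hba j).ne') hq0 hq1 hheavy hlight]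
      with ω hω
    simp [ciInf_eq_iff_forall_eq_of_two_valued hba hω]
  rw [measure_congr hevent,
    hindep.measure_inter_preimage_eq_mul _ fun j _ => measurableSet_singleton a,
    ENNReal.ofReal_prod_of_nonneg fun j _ => hq0 j]
  exact prod_congr rfl fun j _ => hheavy j

theorem measure_ciInf_eq_light [LinearOrder ι] [LocallyFiniteOrderBot ι]
    (hmeas : ∀ j, Measurable (Y j)) (hindep : iIndepFun Y P)
    (hb : StrictMono b) (hba : ∀ j, b j < a) (hq0 : ∀ j, 0 ≤ q j) (hq1 : ∀ j, q j ≤ 1)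
    (hheavy : ∀ j, P {ω | Y j ω = a} = ENNReal.ofReal (q j))
    (hlight : ∀ j, P {ω | Y j ω = b j} = ENNReal.ofReal (1 - q j)) (k : ι) :
    P {ω | ⨅ j, Y j ω = b k} = ENNReal.ofReal ((∏ j ∈ Iio k, q j) * (1 - q k)) := by
  let B : ι → Set ℝ := fun j => if j = k then {b k} else {a}
  have hevent : {ω | ⨅ j, Y j ω = b k} =ᵐ[P] ⋂ j ∈ Iic k, Y j ⁻¹' B j := by
    rw [Filter.eventuallyEq_set]
    filter_upwards [ae_forall_eq_or_eq hmeas (fun j => (hba j).ne') hq0 hq1 hheavy hlight]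
      with ω hω
    simp only [ciInf_eq_iff_of_two_valued hb hba hω, Set.mem_iInter, mem_Iic, Set.mem_preimage,
      B]
    constructor
    · rintro ⟨hlt, hk⟩ j hj
      rcases hj.lt_or_eq with hj | rfl
      · simp [hj.ne, hlt j hj]
      · simp [hk]
    · intro h
      exact ⟨fun j hj => by simpa [hj.ne] using h j hj.le, by simpa using h k le_rfl⟩
  have hB : ∀ j, MeasurableSet (B j) := fun j => by
    by_cases hj : j = k <;> simp [B, hj]
  rw [measure_congr hevent, hindep.measure_inter_preimage_eq_mul _ fun j _ => hB j,
    ← Iio_insert, prod_insert notMem_Iio_self,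
    ENNReal.ofReal_mul (prod_nonneg fun j _ => hq0 j),
    ENNReal.ofReal_prod_of_nonneg fun j _ => hq0 j, mul_comm]
  congr 1
  · refine prod_congr rfl fun j hj => ?_
    simp only [B, if_neg (mem_Iio.1 hj).ne]
    exact hheavy j
  · simp only [B, if_pos rfl]
    exact hlight k

end BiasedCoins

theorem Fin.prod_Iio_val_eq_prod_range {M : Type*} [CommMonoid M] {n : ℕ} (f : ℕ → M)
    (k : Fin n) : ∏ j ∈ Iio k, f j = ∏ j ∈ range k, f j := by
  rw [← Nat.Iio_eq_range, ← Fin.map_valEmbedding_Iio, prod_map]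
  rfl

/-- `coinBias p k` is the paper's `q_{k+1}`: the coins are indexed from `0`. -/
noncomputable def coinBias (p : ℕ → ℝ) (k : ℕ) : ℝ :=
  (1 - ∑ j ∈ Icc 1 (k + 1), p j) / (1 - ∑ j ∈ Icc 1 k, p j)

section CoinBias

variable {m : ℕ} {p : ℕ → ℝ}

theorem sum_Icc_one_succ (p : ℕ → ℝ) (k : ℕ) :
    ∑ j ∈ Icc 1 (k + 1), p j = ∑ j ∈ Icc 1 k, p j + p (k + 1) :=
  sum_Icc_succ_top (by omega) p

theorem one_sub_sum_Icc_eq_sum_Ioc (hpsum : ∑ j ∈ Icc 1 m, p j = 1) {k : ℕ} (hk : k ≤ m) :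
    1 - ∑ j ∈ Icc 1 k, p j = ∑ j ∈ Ioc k m, p j := by
  have hIoc (n : ℕ) : Icc 1 n = Ioc 0 n := Icc_add_one_left_eq_Ioc 0 n
  rw [← hpsum, hIoc, hIoc, ← sum_Ioc_consecutive p (Nat.zero_le k) hk]
  ring

theorem one_sub_sum_Icc_sub_one (hpsum : ∑ j ∈ Icc 1 m, p j = 1) (hm : 1 ≤ m) :
    1 - ∑ j ∈ Icc 1 (m - 1), p j = p m := by
  have h := sum_Icc_one_succ p (m - 1)
  rw [Nat.sub_add_cancel hm, hpsum] at h
  linarith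

theorem one_sub_sum_Icc_nonneg (hp : ∀ i, 1 ≤ i → i ≤ m → 0 < p i)
    (hpsum : ∑ j ∈ Icc 1 m, p j = 1) {k : ℕ} (hk : k ≤ m) :
    0 ≤ 1 - ∑ j ∈ Icc 1 k, p j := by
  rw [one_sub_sum_Icc_eq_sum_Ioc hpsum hk]
  exact sum_nonneg fun j hj => (hp j (by simp at hj; omega) (mem_Ioc.1 hj).2).le

theorem one_sub_sum_Icc_pos (hp : ∀ i, 1 ≤ i → i ≤ m → 0 < p i)
    (hpsum : ∑ j ∈ Icc 1 m, p j = 1) {k : ℕ} (hk : k < m) :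
    0 < 1 - ∑ j ∈ Icc 1 k, p j := by
  rw [one_sub_sum_Icc_eq_sum_Ioc hpsum hk.le]
  exact sum_pos (fun j hj => hp j (by simp at hj; omega) (mem_Ioc.1 hj).2) ⟨m, by simp [hk]⟩

theorem one_sub_sum_Icc_mul_one_sub_coinBias (hp : ∀ i, 1 ≤ i → i ≤ m → 0 < p i)
    (hpsum : ∑ j ∈ Icc 1 m, p j = 1) {k : ℕ} (hk : k < m) :
    (1 - ∑ j ∈ Icc 1 k, p j) * (1 - coinBias p k) = p (k + 1) := by
  have := (one_sub_sum_Icc_pos hp hpsum hk).ne'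
  rw [coinBias, sum_Icc_one_succ]
  field_simp
  ring

theorem coinBias_nonneg (hp : ∀ i, 1 ≤ i → i ≤ m → 0 < p i)
    (hpsum : ∑ j ∈ Icc 1 m, p j = 1) {k : ℕ} (hk : k < m) : 0 ≤ coinBias p k :=
  div_nonneg (one_sub_sum_Icc_nonneg hp hpsum hk) (one_sub_sum_Icc_pos hp hpsum hk).le

theorem coinBias_le_one (hp : ∀ i, 1 ≤ i → i ≤ m → 0 < p i)
    (hpsum : ∑ j ∈ Icc 1 m, p j = 1) {k : ℕ} (hk : k < m) : coinBias p k ≤ 1 := by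
  have hprod : 0 < (1 - ∑ j ∈ Icc 1 k, p j) * (1 - coinBias p k) :=
    one_sub_sum_Icc_mul_one_sub_coinBias hp hpsum hk ▸ hp (k + 1) (by omega) hk
  linarith [pos_of_mul_pos_right hprod (one_sub_sum_Icc_pos hp hpsum hk).le]

theorem prod_range_coinBias (hp : ∀ i, 1 ≤ i → i ≤ m → 0 < p i)
    (hpsum : ∑ j ∈ Icc 1 m, p j = 1) {k : ℕ} (hk : k ≤ m) :
    ∏ j ∈ range k, coinBias p j = 1 - ∑ j ∈ Icc 1 k, p j := by
  induction k with
  | zero => simp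
  | succ k ih =>
    rw [prod_range_succ, ih (by omega), coinBias,
      mul_div_cancel₀ _ (one_sub_sum_Icc_pos hp hpsum (by omega)).ne']

end CoinBias

theorem rw_to_bcw_minimum_general {Ω : Type*} [MeasurableSpace Ω]
    (P : Measure Ω) [IsProbabilityMeasure P]
    (m : ℕ) (hm : 2 ≤ m) (W p : ℕ → ℝ)
    (hWmono : ∀ i j, 1 ≤ i → i < j → j ≤ m → W i < W j)
    (hp : ∀ i, 1 ≤ i → i ≤ m → 0 < p i)
    (hpsum : ∑ j ∈ Icc 1 m, p j = 1)
    (Y : Fin (m - 1) → Ω → ℝ)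
    (hmeas : ∀ i, Measurable (Y i))
    (hindep : iIndepFun Y P)
    (hheavy : ∀ i : Fin (m - 1), P {ω | Y i ω = W m}
      = ENNReal.ofReal ((1 - ∑ j ∈ Icc 1 ((i : ℕ) + 1), p j)
          / (1 - ∑ j ∈ Icc 1 (i : ℕ), p j)))
    (hlight : ∀ i : Fin (m - 1), P {ω | Y i ω = W ((i : ℕ) + 1)}
      = ENNReal.ofReal (1 - (1 - ∑ j ∈ Icc 1 ((i : ℕ) + 1), p j)
          / (1 - ∑ j ∈ Icc 1 (i : ℕ), p j))) :
    ∀ i, 1 ≤ i → i ≤ m →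
      P {ω | (⨅ j : Fin (m - 1), Y j ω) = W i} = ENNReal.ofReal (p i) := by
  have hb : StrictMono fun j : Fin (m - 1) => W (j + 1) := fun j k hjk =>
    hWmono _ _ (by omega) (by simpa using hjk) (by omega)
  have hba (j : Fin (m - 1)) : W (j + 1) < W m := hWmono _ _ (by omega) (by omega) le_rfl
  have hq0 (j : Fin (m - 1)) : 0 ≤ coinBias p j := coinBias_nonneg hp hpsum (by omega)
  have hq1 (j : Fin (m - 1)) : coinBias p j ≤ 1 := coinBias_le_one hp hpsum (by omega)
  intro i hi1 him
  rcases him.lt_or_eq.imp_right Eq.symm with him | rfl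
  · have hlight_i := measure_ciInf_eq_light (q := fun j : Fin (m - 1) => coinBias p j) hmeas
      hindep hb hba hq0 hq1 hheavy hlight ⟨i - 1, by omega⟩
    rw [Nat.sub_add_cancel hi1] at hlight_i
    rw [hlight_i, Fin.prod_Iio_val_eq_prod_range, Fin.val_mk,
      prod_range_coinBias hp hpsum (by omega),
      one_sub_sum_Icc_mul_one_sub_coinBias hp hpsum (by omega), Nat.sub_add_cancel hi1]
  · have : Nonempty (Fin (m - 1)) := ⟨⟨0, by omega⟩⟩
    rw [measure_ciInf_eq_heavy (q := fun j : Fin (m - 1) => coinBias p j) hmeas hindep hba hq0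
      hq1 hheavy hlight,
      Fin.prod_univ_eq_prod_range (coinBias p), prod_range_coinBias hp hpsum (by omega),
      one_sub_sum_Icc_sub_one hpsum (by omega)]

/-- **Correctness of the RW → BCW transformation.** Let `W 1 < ⋯ < W m` be nonnegative
reals and `p 1, …, p m` strictly positive reals summing to `1`. For `1 ≤ i ≤ m-1` let
`q i = (1 - ∑_{j=1}^{i} p j)/(1 - ∑_{j=1}^{i-1} p j)` and let `Y 1, …, Y (m-1)` be
independent random variables, `Y i` taking the value `W m` with probability `q i` and the
value `W i` with probability `1 - q i`. Then the minimum `M = min_i Y i` satisfies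
`Pr(M = W i) = p i` for every `1 ≤ i ≤ m`. -/
theorem rw_to_bcw_minimum {Ω : Type*} [MeasurableSpace Ω]
    (P : Measure Ω) [IsProbabilityMeasure P]
    (m : ℕ) (hm : 2 ≤ m) (W p : ℕ → ℝ)
    (hW0 : ∀ i, 1 ≤ i → i ≤ m → 0 ≤ W i)
    (hWmono : ∀ i j, 1 ≤ i → i < j → j ≤ m → W i < W j)
    (hp : ∀ i, 1 ≤ i → i ≤ m → 0 < p i)
    (hpsum : ∑ j ∈ Icc 1 m, p j = 1)
    (Y : Fin (m - 1) → Ω → ℝ)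
    (hmeas : ∀ i, Measurable (Y i))
    (hindep : iIndepFun Y P)
    (hheavy : ∀ i : Fin (m - 1), P {ω | Y i ω = W m}
      = ENNReal.ofReal ((1 - ∑ j ∈ Icc 1 ((i : ℕ) + 1), p j)
          / (1 - ∑ j ∈ Icc 1 (i : ℕ), p j)))
    (hlight : ∀ i : Fin (m - 1), P {ω | Y i ω = W ((i : ℕ) + 1)}
      = ENNReal.ofReal (1 - (1 - ∑ j ∈ Icc 1 ((i : ℕ) + 1), p j)
          / (1 - ∑ j ∈ Icc 1 (i : ℕ), p j))) :
    ∀ i, 1 ≤ i → i ≤ m →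
      P {ω | (⨅ j : Fin (m - 1), Y j ω) = W i} = ENNReal.ofReal (p i) :=
  rw_to_bcw_minimum_general P m hm W p hWmono hp hpsum Y hmeas hindep hheavy hlight
end

section
/- Let G be a finite connected simple graph and let s ≠ t be two of its vertices. Assign to each edge of G independently the weight 0 with probability 1/2 and the weight 1 with probability 1/2, and let G′ be the multigraph obtained from G by adding one extra edge between s and t of fixed weight 1. Then the expected weighted distance from s to t in G′ equals the probability that s and t lie in different connected components of the spanning subgraph of G consisting of the edges that received weight 0. -/
/-!
Since every weight is `0` or `1`, a walk of total weight below `1` uses only edges of weight `0`,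
so the distance from `s` to `t` is `0` when the weight-`0` edges connect them, and otherwise at
least `1`; the extra `(s,t)`-edge makes it exactly `1`. Hence the distance is almost surely the
indicator of the disconnection event, and its expectation is that event's probability.
-/

open MeasureTheory ProbabilityTheory Finset

/-- `WalkCost ends w u v c` says that in the multigraph with endpoint map
`ends : E → Sym2 V` and edge weights `w : E → ℝ` there is a walk from `u` to `v`
whose total weight is `c`. -/
def WalkCost {V E : Type*} (ends : E → Sym2 V) (w : E → ℝ) (u v : V) (c : ℝ) : Prop :=
  ∃ (k : ℕ) (vs : Fin (k + 1) → V) (es : Fin k → E),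
    vs 0 = u ∧ vs (Fin.last k) = v ∧
    (∀ i : Fin k, ends (es i) = s(vs i.castSucc, vs i.succ)) ∧
    c = ∑ i, w (es i)

/-- The weighted distance between two vertices of a multigraph: the infimum of the
total weight over all walks joining them. -/
noncomputable def mdist {V E : Type*} (ends : E → Sym2 V) (w : E → ℝ) (u v : V) : ℝ :=
  sInf {c | WalkCost ends w u v c}

section Multigraph

variable {V E : Type*} {ends : E → Sym2 V} {w : E → ℝ} {u v : V} {c : ℝ}

def zeroWeightGraph (ends : E → Sym2 V) (w : E → ℝ) : SimpleGraph V :=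
  SimpleGraph.fromEdgeSet {p | ∃ e, ends e = p ∧ w e = 0}

lemma zeroWeightGraph_sumElim {E' : Type*} (ends' : E' → Sym2 V) {w' : E' → ℝ}
    (hw' : ∀ e, w' e ≠ 0) :
    zeroWeightGraph (Sum.elim ends ends') (Sum.elim w w') = zeroWeightGraph ends w := by
  simp [zeroWeightGraph, hw']

lemma zeroWeightGraph_reachable_of_ends {e : E} {a b : V} (he : ends e = s(a, b))
    (hw : w e = 0) : (zeroWeightGraph ends w).Reachable a b := by
  by_cases hab : a = b
  · exact hab ▸ SimpleGraph.Reachable.refl a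
  · exact SimpleGraph.Adj.reachable <| (SimpleGraph.fromEdgeSet_adj _).2 ⟨⟨e, he, hw⟩, hab⟩

lemma WalkCost.nil (ends : E → Sym2 V) (w : E → ℝ) (u : V) : WalkCost ends w u u 0 :=
  ⟨0, fun _ => u, Fin.elim0, rfl, rfl, fun i => i.elim0, by simp⟩

lemma WalkCost.cons {x : V} (e : E) (he : ends e = s(u, x)) (h : WalkCost ends w x v c) :
    WalkCost ends w u v (w e + c) := by
  obtain ⟨k, vs, es, h0, hl, hadj, hc⟩ := h
  refine ⟨k + 1, Fin.cons u vs, Fin.cons e es, rfl, hl, fun i => ?_, by simp [Fin.sum_univ_succ, hc]⟩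
  refine Fin.cases ?_ (fun j => ?_) i
  · simpa [← h0] using he
  · simpa [← Fin.succ_castSucc] using hadj j

lemma WalkCost.nonneg (hw : ∀ e, 0 ≤ w e) (h : WalkCost ends w u v c) : 0 ≤ c := by
  obtain ⟨k, vs, es, -, -, -, rfl⟩ := h
  exact sum_nonneg fun i _ => hw _

lemma SimpleGraph.Walk.walkCost_zero (p : (zeroWeightGraph ends w).Walk u v) :
    WalkCost ends w u v 0 := by
  induction p with
  | nil => exact WalkCost.nil ends w _
  | cons hadj _ ih =>
    obtain ⟨⟨e, he, hwe⟩, -⟩ := (SimpleGraph.fromEdgeSet_adj _).1 hadj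
    simpa [hwe] using WalkCost.cons e he ih

lemma WalkCost.reachable_zeroWeightGraph (hw : ∀ e, w e = 0 ∨ 1 ≤ w e)
    (h : WalkCost ends w u v c) (hc : c < 1) : (zeroWeightGraph ends w).Reachable u v := by
  obtain ⟨k, vs, es, rfl, rfl, hadj, rfl⟩ := h
  have hnonneg : ∀ e, 0 ≤ w e := fun e => (hw e).elim (·.ge) (zero_le_one.trans)
  have hzero : ∀ i, w (es i) = 0 := fun i =>
    (hw (es i)).resolve_right fun h1 =>
      hc.not_ge (h1.trans (single_le_sum (fun j _ => hnonneg (es j)) (mem_univ i)))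
  suffices ∀ j : Fin (k + 1), (zeroWeightGraph ends w).Reachable (vs 0) (vs j) from this _
  intro j
  induction j using Fin.induction with
  | zero => exact SimpleGraph.Reachable.refl _
  | succ j ih => exact ih.trans (zeroWeightGraph_reachable_of_ends (hadj j) (hzero j))

lemma mdist_eq_ite [Decidable ((zeroWeightGraph ends w).Reachable u v)]
    (hw : ∀ e, w e = 0 ∨ 1 ≤ w e) (hone : WalkCost ends w u v 1) :
    mdist ends w u v = if (zeroWeightGraph ends w).Reachable u v then 0 else 1 := by
  have hnonneg : ∀ e, 0 ≤ w e := fun e => (hw e).elim (·.ge) (zero_le_one.trans)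
  apply IsLeast.csInf_eq
  split_ifs with hreach
  · exact ⟨hreach.some.walkCost_zero, fun c hc => hc.nonneg hnonneg⟩
  · exact ⟨hone, fun c hc => not_lt.1 fun hlt => hreach (hc.reachable_zeroWeightGraph hw hlt)⟩

end Multigraph

lemma measurableSet_zeroWeightGraph_reachable {V E Ω : Type*} [Finite E] [MeasurableSpace Ω]
    (ends : E → Sym2 V) {X : E → Ω → ℝ} (hX : ∀ e, Measurable (X e)) (u v : V) :
    MeasurableSet {ω | (zeroWeightGraph ends (fun e => X e ω)).Reachable u v} := by
  have hpattern : Measurable fun ω e => X e ω = 0 :=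
    measurable_pi_lambda _ fun e => measurableSet_setOfPred.1 (hX e (measurableSet_singleton 0))
  -- the event depends on `ω` only through its zero pattern, which ranges over a countable type
  exact hpattern (Set.to_countable
    {f : E → Prop | (SimpleGraph.fromEdgeSet {p | ∃ e, ends e = p ∧ f e}).Reachable u v}).measurableSet

lemma ae_eq_zero_or_eq_one {Ω : Type*} [MeasurableSpace Ω] {P : Measure Ω}
    [IsProbabilityMeasure P] {Y : Ω → ℝ} (hY : Measurable Y)
    (h0 : P {ω | Y ω = 0} = 1 / 2) (h1 : P {ω | Y ω = 1} = 1 / 2) :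
    ∀ᵐ ω ∂P, Y ω = 0 ∨ Y ω = 1 := by
  have hdisj : Disjoint {ω | Y ω = 0} {ω | Y ω = 1} :=
    Set.disjoint_left.2 fun ω (h0 : Y ω = 0) (h1 : Y ω = 1) => by simp [h0] at h1
  have hmeas : MeasurableSet {ω | Y ω = 0 ∨ Y ω = 1} :=
    hY (measurableSet_singleton 0 |>.union (measurableSet_singleton 1))
  rw [ae_iff_measure_eq hmeas.nullMeasurableSet, Set.ofPred_or,
    measure_union hdisj (hY (measurableSet_singleton 1)), h0, h1]
  simp [ENNReal.inv_two_add_inv_two]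

theorem expected_distance_eq_disconnection_probability_general
    {V : Type*} [Fintype V] (G : SimpleGraph V)
    (s t : V)
    {Ω : Type*} [MeasurableSpace Ω] (P : Measure Ω) [IsProbabilityMeasure P]
    (X : G.edgeSet → Ω → ℝ)
    (hmeas : ∀ e, Measurable (X e))
    (h0 : ∀ e, P {ω | X e ω = 0} = 1 / 2)
    (h1 : ∀ e, P {ω | X e ω = 1} = 1 / 2) :
    ∫ ω, mdist (Sum.elim (fun e : G.edgeSet => (e : Sym2 V)) (fun _ : Unit => s(s, t)))
        (Sum.elim (fun e : G.edgeSet => X e ω) (fun _ : Unit => (1 : ℝ))) s t ∂P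
      = (P {ω | ¬ (SimpleGraph.fromEdgeSet
          {p | ∃ e : G.edgeSet, (e : Sym2 V) = p ∧ X e ω = 0}).Reachable s t}).toReal := by
  classical
  have hdisconnected : MeasurableSet {ω | ¬ (SimpleGraph.fromEdgeSet
      {p | ∃ e : G.edgeSet, (e : Sym2 V) = p ∧ X e ω = 0}).Reachable s t} :=
    (measurableSet_zeroWeightGraph_reachable Subtype.val hmeas s t).compl
  have hbinary : ∀ᵐ ω ∂P, ∀ e, X e ω = 0 ∨ X e ω = 1 :=
    ae_all_iff.2 fun e => ae_eq_zero_or_eq_one (hmeas e) (h0 e) (h1 e)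
  rw [← measureReal_def, ← integral_indicator_one hdisconnected]
  refine integral_congr_ae (hbinary.mono fun ω hω => ?_)
  dsimp only
  set ends := Sum.elim (fun e : G.edgeSet => (e : Sym2 V)) (fun _ : Unit => s(s, t))
  set w := Sum.elim (fun e : G.edgeSet => X e ω) (fun _ : Unit => (1 : ℝ))
  have hweights : ∀ f, w f = 0 ∨ 1 ≤ w f := by
    rintro (e | -)
    · exact (hω e).imp_right Eq.ge
    · exact Or.inr le_rfl
  have hextra : WalkCost ends w s t 1 := by
    simpa [w] using WalkCost.cons (ends := ends) (w := w) (Sum.inr ()) rfl (WalkCost.nil ends w t)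
  rw [mdist_eq_ite hweights hextra, zeroWeightGraph_sumElim _ fun _ => one_ne_zero]
  simp [Set.indicator_apply, zeroWeightGraph]

/-- **The hardness reduction identity.** Let `G` be a finite connected simple graph and
`s ≠ t` two of its vertices. Give each edge of `G` independently the weight `0` with
probability `1/2` and the weight `1` with probability `1/2`, and let `G'` be the
multigraph obtained from `G` by adding one extra `(s,t)`-edge of fixed weight `1`
(its edge type is `↥G.edgeSet ⊕ Unit`). Then the expected weighted distance from `s`
to `t` in `G'` equals the probability that `s` and `t` lie in different connected
components of the spanning subgraph of `G` formed by the edges of weight `0`. -/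
theorem expected_distance_eq_disconnection_probability
    {V : Type*} [Fintype V] (G : SimpleGraph V) (hG : G.Connected)
    (s t : V) (hst : s ≠ t)
    {Ω : Type*} [MeasurableSpace Ω] (P : Measure Ω) [IsProbabilityMeasure P]
    (X : G.edgeSet → Ω → ℝ)
    (hmeas : ∀ e, Measurable (X e))
    (hindep : iIndepFun X P)
    (h0 : ∀ e, P {ω | X e ω = 0} = 1 / 2)
    (h1 : ∀ e, P {ω | X e ω = 1} = 1 / 2) :
    ∫ ω, mdist (Sum.elim (fun e : G.edgeSet => (e : Sym2 V)) (fun _ : Unit => s(s, t)))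
        (Sum.elim (fun e : G.edgeSet => X e ω) (fun _ : Unit => (1 : ℝ))) s t ∂P
      = (P {ω | ¬ (SimpleGraph.fromEdgeSet
          {p | ∃ e : G.edgeSet, (e : Sym2 V) = p ∧ X e ω = 0}).Reachable s t}).toReal :=
  expected_distance_eq_disconnection_probability_general G s t P X hmeas h0 h1
end

section
/- Let m ≥ 1 be an integer and let X be a real-valued random variable with Pr(X = 1) = 1 − 2^{−m} and Pr(X = 2^{2m}) = 2^{−m}. Then Var[X] ≥ 2^{m−3}·(E[X])². -/
/-!
A variable taking only the values `a` and `b`, with probabilities `1 - p` and `p`, has mean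
`(1 - p) a + p b` and variance `p (1 - p) (b - a)²`. With `t = 2^m`, `p = 1/t`, `a = 1`, `b = t²`
the claimed bound becomes the polynomial inequality `8 (t - 1)(t² - 1)² ≥ t (t² + t - 1)²`,
which holds for `t ≥ 2`.
-/

open MeasureTheory ProbabilityTheory

namespace ProbabilityTheory

variable {Ω : Type*} [MeasurableSpace Ω] {P : Measure Ω} {X : Ω → ℝ} {a b : ℝ}

lemma ae_eq_or_eq_of_measure_add_eq_one [IsProbabilityMeasure P] (hX : Measurable X)
    (hab : a ≠ b) (h : P {ω | X ω = a} + P {ω | X ω = b} = 1) :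
    ∀ᵐ ω ∂P, X ω = a ∨ X ω = b := by
  have hdisj : Disjoint {ω | X ω = a} {ω | X ω = b} :=
    Set.disjoint_left.2 fun ω ha hb => hab (ha.symm.trans hb)
  have hA : MeasurableSet {ω | X ω = a} := hX (measurableSet_singleton a)
  have hB : MeasurableSet {ω | X ω = b} := hX (measurableSet_singleton b)
  have hAB : MeasurableSet {ω | X ω = a ∨ X ω = b} := by
    simpa only [Set.ofPred_or] using hA.union hB
  rw [ae_iff_measure_eq hAB.nullMeasurableSet, Set.ofPred_or, measure_union hdisj hB, h,
    measure_univ]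

lemma integral_comp_eq_of_ae_eq_or_eq [IsFiniteMeasure P] (hX : Measurable X) (hab : a ≠ b)
    (h : ∀ᵐ ω ∂P, X ω = a ∨ X ω = b) (f : ℝ → ℝ) :
    ∫ ω, f (X ω) ∂P = f a * P.real {ω | X ω = a} + f b * P.real {ω | X ω = b} := by
  have hA : MeasurableSet {ω | X ω = a} := hX (measurableSet_singleton a)
  have hB : MeasurableSet {ω | X ω = b} := hX (measurableSet_singleton b)
  have hsplit : (fun ω => f (X ω)) =ᵐ[P]
      fun ω => {ω | X ω = a}.indicator (fun _ => f a) ω +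
        {ω | X ω = b}.indicator (fun _ => f b) ω := by
    filter_upwards [h] with ω hω
    rcases hω with hω | hω <;> simp [hω, hab, hab.symm]
  rw [integral_congr_ae hsplit, integral_add ((integrable_const _).indicator hA)
    ((integrable_const _).indicator hB), integral_indicator_const _ hA,
    integral_indicator_const _ hB, smul_eq_mul, smul_eq_mul, mul_comm, mul_comm (P.real _)]

lemma integral_eq_of_ae_eq_or_eq [IsFiniteMeasure P] (hX : Measurable X) (hab : a ≠ b)
    (h : ∀ᵐ ω ∂P, X ω = a ∨ X ω = b) :
    ∫ ω, X ω ∂P = a * P.real {ω | X ω = a} + b * P.real {ω | X ω = b} :=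
  integral_comp_eq_of_ae_eq_or_eq hX hab h id

lemma variance_eq_of_ae_eq_or_eq [IsProbabilityMeasure P] (hX : Measurable X) (hab : a ≠ b)
    (h : ∀ᵐ ω ∂P, X ω = a ∨ X ω = b) :
    Var[X; P] = P.real {ω | X ω = a} * P.real {ω | X ω = b} * (b - a) ^ 2 := by
  have hbdd : ∀ᵐ ω ∂P, ‖X ω‖ ≤ max |a| |b| := by
    filter_upwards [h] with ω hω
    rcases hω with hω | hω <;> simp [hω]
  have hsum : P.real {ω | X ω = a} + P.real {ω | X ω = b} = 1 := by
    simpa using (integral_comp_eq_of_ae_eq_or_eq hX hab h (fun _ => 1)).symm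
  have hsq := integral_comp_eq_of_ae_eq_or_eq hX hab h (· ^ 2)
  rw [variance_eq_sub (MemLp.of_bound hX.aestronglyMeasurable _ hbdd)]
  simp only [Pi.pow_apply] at hsq ⊢
  rw [integral_eq_of_ae_eq_or_eq hX hab h, hsq]
  linear_combination -(a ^ 2 * P.real {ω | X ω = a} + b ^ 2 * P.real {ω | X ω = b}) * hsum

end ProbabilityTheory

lemma critical_ratio_bound {t : ℝ} (ht : 2 ≤ t) :
    t / 8 * (1 - t⁻¹ + t ^ 2 * t⁻¹) ^ 2 ≤ (1 - t⁻¹) * t⁻¹ * (t ^ 2 - 1) ^ 2 := by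
  have ht0 : 0 < t := by linarith
  rw [← sub_nonneg]
  have hpoly : (1 - t⁻¹) * t⁻¹ * (t ^ 2 - 1) ^ 2 - t / 8 * (1 - t⁻¹ + t ^ 2 * t⁻¹) ^ 2
      = (7 * t ^ 5 - 10 * t ^ 4 - 15 * t ^ 3 + 18 * t ^ 2 + 7 * t - 8) / (8 * t ^ 2) := by
    field_simp
    ring
  rw [hpoly]
  apply div_nonneg _ (by positivity)
  nlinarith [mul_nonneg (mul_nonneg (sq_nonneg (t - 2)) (pow_pos ht0 3).le) (sub_nonneg.2 ht),
    pow_pos ht0 3, pow_pos ht0 4]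

/-- **High critical ratio.** If `X` takes the value `1` with probability `1 - 2⁻ᵐ` and the
value `2^(2m)` with probability `2⁻ᵐ` (the diameter of the identically distributed weighted
graph with `2` vertices and `m` parallel edges), then `Var[X] ≥ 2^(m-3) · (E[X])²`. -/
theorem high_critical_ratio {Ω : Type*} [MeasurableSpace Ω]
    (P : Measure Ω) [IsProbabilityMeasure P]
    (m : ℕ) (hm : 1 ≤ m) (X : Ω → ℝ) (hX : Measurable X)
    (h1 : P {ω | X ω = 1} = ENNReal.ofReal (1 - ((2 : ℝ) ^ m)⁻¹))
    (h2 : P {ω | X ω = (2 : ℝ) ^ (2 * m)} = ENNReal.ofReal (((2 : ℝ) ^ m)⁻¹)) :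
    variance X P ≥ (2 : ℝ) ^ ((m : ℝ) - 3) * (∫ ω, X ω ∂P) ^ 2 := by
  rw [pow_mul'] at h2
  set t : ℝ := 2 ^ m
  have ht : 2 ≤ t := le_self_pow₀ one_le_two (by omega)
  have hp : t⁻¹ ≤ 1 := inv_le_one_of_one_le₀ (by linarith)
  have hne : (1 : ℝ) ≠ t ^ 2 := by nlinarith
  have hae : ∀ᵐ ω ∂P, X ω = 1 ∨ X ω = t ^ 2 := by
    refine ae_eq_or_eq_of_measure_add_eq_one hX hne ?_
    rw [h1, h2, ← ENNReal.ofReal_add (by linarith) (by positivity)]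
    simp
  have hreal1 : P.real {ω | X ω = 1} = 1 - t⁻¹ := by
    rw [measureReal_def, h1, ENNReal.toReal_ofReal (by linarith)]
  have hreal2 : P.real {ω | X ω = t ^ 2} = t⁻¹ := by
    rw [measureReal_def, h2, ENNReal.toReal_ofReal (by positivity)]
  have hscale : (2 : ℝ) ^ ((m : ℝ) - 3) = t / 8 := by
    rw [Real.rpow_sub two_pos, Real.rpow_natCast]
    norm_num [t]
  rw [variance_eq_of_ae_eq_or_eq hX hne hae, integral_eq_of_ae_eq_or_eq hX hne hae, hreal1,
    hreal2, hscale, one_mul]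
  exact critical_ratio_bound ht
end
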